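/- arXiv:1602.03255 — 3 statements merged into one kernel-verified Lean document; each statement's English description precedes it below -/
import Mathlib

section
/- Let x : [0,1] → ℝ be of finite p-variation and y : [0,1] → ℝ of finite q-variation with p, q ≥ 1 and 1/p + 1/q > 1. If x and y are continuous, then for any sequence of partitions with mesh tending to 0, the Riemann–Stieltjes sums Σ_i y_{t_{i-1}}(x_{t_i} - x_{t_{i-1}}) converge to a common limit (the Young integral). In particular, if additionally x is of finite 1-variation, the limit equals the Riemann–Stieltjes integral ∫_0^1 y dx. -/
open scoped BigOperators

/-- Set of q-variation partition sums of a one-parameter path on `[0,1]`. -/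
def pathPVarSums {E : Type*} [NormedAddCommGroup E] (x : ℝ → E) (q : ℝ) : Set ℝ :=
  {r | ∃ (n : ℕ) (t : Fin (n + 1) → ℝ), Monotone t ∧ t 0 = 0 ∧ t (Fin.last n) = 1 ∧
    r = (∑ i : Fin n, ‖x (t i.succ) - x (t i.castSucc)‖ ^ q) ^ (1 / q)}

namespace YoungAux

/-- increment `r`-sum of a partition -/
noncomputable def pS (z : ℝ → ℝ) (r : ℝ) (t : ℕ → ℝ) (n : ℕ) : ℝ :=
  ∑ i ∈ Finset.range n, |z (t (i+1)) - z (t i)| ^ r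

/-- left-endpoint Riemann–Stieltjes sum -/
noncomputable def RSn (y x : ℝ → ℝ) (t : ℕ → ℝ) (n : ℕ) : ℝ :=
  ∑ i ∈ Finset.range n, y (t i) * (x (t (i+1)) - x (t i))

def WSet (z : ℝ → ℝ) (r a b : ℝ) : Set ℝ :=
  {S | ∃ n t, Monotone t ∧ t 0 = a ∧ t n = b ∧ S = pS z r t n}

noncomputable def W (z : ℝ → ℝ) (r a b : ℝ) : ℝ := sSup (WSet z r a b)

lemma pS_nonneg (z : ℝ → ℝ) (r : ℝ) (t : ℕ → ℝ) (n : ℕ) : 0 ≤ pS z r t n :=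
  Finset.sum_nonneg fun _ _ => Real.rpow_nonneg (abs_nonneg _) _

lemma mem_WSet_self {z : ℝ → ℝ} {r a b : ℝ} (hab : a ≤ b) :
    |z b - z a| ^ r ∈ WSet z r a b := by
  refine ⟨1, fun i => if i = 0 then a else b, ?_, by simp, by simp, ?_⟩
  · refine monotone_nat_of_le_succ fun n => ?_
    rcases Nat.eq_zero_or_pos n with h | h
    · simp [h, hab]
    · simp [Nat.pos_iff_ne_zero.mp h]
  · simp [pS]

lemma WSet_nonempty {z : ℝ → ℝ} {r a b : ℝ} (hab : a ≤ b) : (WSet z r a b).Nonempty :=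
  ⟨_, mem_WSet_self hab⟩

lemma endpoints_le {z : ℝ → ℝ} {r a b S : ℝ} (h : S ∈ WSet z r a b) : a ≤ b := by
  obtain ⟨n, t, ht, h0, hn, _⟩ := h
  rw [← h0, ← hn]; exact ht (Nat.zero_le n)

/-- concatenation of partitions -/
lemma add_mem_WSet {z : ℝ → ℝ} {r a b c S1 S2 : ℝ}
    (h1 : S1 ∈ WSet z r a c) (h2 : S2 ∈ WSet z r c b) : S1 + S2 ∈ WSet z r a b := by
  obtain ⟨n1, t1, ht1, ht10, ht1n, hS1⟩ := h1
  obtain ⟨n2, t2, ht2, ht20, ht2n, hS2⟩ := h2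
  refine ⟨n1 + n2, fun i => if i < n1 then t1 i else t2 (i - n1), ?_, ?_, ?_, ?_⟩
  · refine monotone_nat_of_le_succ fun i => ?_
    by_cases h : i + 1 < n1
    · simp only [if_pos h, if_pos (Nat.lt_of_succ_lt h)]
      exact ht1 (Nat.le_succ i)
    · by_cases h' : i < n1
      · simp only [if_pos h', if_neg h]
        have : i + 1 = n1 := by omega
        calc t1 i ≤ t1 n1 := ht1 (by omega)
          _ = c := ht1n
          _ = t2 0 := ht20.symm
          _ = t2 (i + 1 - n1) := by rw [this]; simp
      · simp only [if_neg h', if_neg h]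
        exact ht2 (by omega)
  · by_cases h : 0 < n1
    · simp [h, ht10]
    · have hn1 : n1 = 0 := by omega
      have : a = c := by rw [← ht10, ← ht1n, hn1]
      simp [hn1, ht20, this]
  · have : ¬ (n1 + n2 < n1) := by omega
    simp [this, ht2n]
  · rw [hS1, hS2]
    unfold pS
    rw [Finset.sum_range_add]
    congr 1
    · apply Finset.sum_congr rfl
      intro i hi
      simp only [Finset.mem_range] at hi
      beta_reduce
      have h1 : (if i < n1 then t1 i else t2 (i - n1)) = t1 i := if_pos hi
      by_cases h : i + 1 < n1
      · rw [h1, if_pos h]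
      · have : i + 1 = n1 := by omega
        rw [h1, if_neg h, this]
        simp [ht20, ← ht1n, this]
    · apply Finset.sum_congr rfl
      intro i _
      beta_reduce
      have h1 : ¬ (n1 + i < n1) := by omega
      have h2 : ¬ (n1 + i + 1 < n1) := by omega
      rw [if_neg h1, if_neg h2]
      have e1 : n1 + i + 1 - n1 = i + 1 := by omega
      have e2 : n1 + i - n1 = i := by omega
      rw [e1, e2]

/-- every sum over a sub-partition of `[a,b] ⊆ [0,1]` is bounded by a global bound -/
lemma WSet_le_of_global {z : ℝ → ℝ} {r C : ℝ}
    (hC : ∀ S ∈ WSet z r 0 1, S ≤ C)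
    {a b S : ℝ} (ha : 0 ≤ a) (hb : b ≤ 1) (h : S ∈ WSet z r a b) : S ≤ C := by
  have hab : a ≤ b := endpoints_le h
  have h1 : |z a - z 0| ^ r + S ∈ WSet z r 0 b := add_mem_WSet (mem_WSet_self ha) h
  have h2 : (|z a - z 0| ^ r + S) + |z 1 - z b| ^ r ∈ WSet z r 0 1 :=
    add_mem_WSet h1 (mem_WSet_self hb)
  have := hC _ h2
  nlinarith [Real.rpow_nonneg (abs_nonneg (z a - z 0)) r,
    Real.rpow_nonneg (abs_nonneg (z 1 - z b)) r]

section Wlemmas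

variable {z : ℝ → ℝ} {r C : ℝ}
  (hC : ∀ S ∈ WSet z r 0 1, S ≤ C)

include hC

lemma bddAbove_WSet {a b : ℝ} (ha : 0 ≤ a) (hb : b ≤ 1) : BddAbove (WSet z r a b) :=
  ⟨C, fun _ h => WSet_le_of_global hC ha hb h⟩

lemma le_W {a b : ℝ} (ha : 0 ≤ a) (hab : a ≤ b) (hb : b ≤ 1) :
    |z b - z a| ^ r ≤ W z r a b :=
  le_csSup (bddAbove_WSet hC ha hb) (mem_WSet_self hab)

lemma W_nonneg {a b : ℝ} (ha : 0 ≤ a) (hab : a ≤ b) (hb : b ≤ 1) : 0 ≤ W z r a b :=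
  le_trans (Real.rpow_nonneg (abs_nonneg _) r) (le_W hC ha hab hb)

lemma W_le {a b : ℝ} (ha : 0 ≤ a) (hab : a ≤ b) (hb : b ≤ 1) : W z r a b ≤ C :=
  csSup_le (WSet_nonempty hab) (fun _ h => WSet_le_of_global hC ha hb h)

lemma W_superadd {a c b : ℝ} (ha : 0 ≤ a) (hac : a ≤ c) (hcb : c ≤ b) (hb : b ≤ 1) :
    W z r a c + W z r c b ≤ W z r a b := by
  have hc0 : 0 ≤ c := le_trans ha hac
  have hc1 : c ≤ 1 := le_trans hcb hb
  rw [W, W]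
  rw [← csSup_add (WSet_nonempty hac) (bddAbove_WSet hC ha hc1)
    (WSet_nonempty hcb) (bddAbove_WSet hC hc0 hb)]
  apply csSup_le ((WSet_nonempty hac).add (WSet_nonempty hcb))
  rintro S ⟨S1, h1, S2, h2, rfl⟩
  exact le_csSup (bddAbove_WSet hC ha hb) (add_mem_WSet h1 h2)

lemma W_chain {t : ℕ → ℝ} (ht : Monotone t) {n : ℕ} (h0 : 0 ≤ t 0) (hn : t n ≤ 1) :
    ∑ i ∈ Finset.range n, W z r (t i) (t (i+1)) ≤ W z r (t 0) (t n) := by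
  induction n with
  | zero => simpa using W_nonneg hC h0 le_rfl hn
  | succ n ih =>
    have hn' : t n ≤ 1 := le_trans (ht (Nat.le_succ n)) hn
    rw [Finset.sum_range_succ]
    calc _ ≤ W z r (t 0) (t n) + W z r (t n) (t (n+1)) := by
            exact add_le_add_left (ih hn') _
      _ ≤ _ := W_superadd hC h0 (ht (Nat.zero_le n)) (ht (Nat.le_succ n)) hn

lemma W_mono {a a' b' b : ℝ} (ha : 0 ≤ a) (h1 : a ≤ a') (h2 : a' ≤ b') (h3 : b' ≤ b)
    (hb : b ≤ 1) : W z r a' b' ≤ W z r a b := by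
  have s1 := W_superadd hC ha h1 h2 (le_trans h3 hb)
  have s2 := W_superadd hC ha (le_trans h1 h2) h3 hb
  have n1 := W_nonneg hC ha h1 (le_trans h2 (le_trans h3 hb))
  have n2 := W_nonneg hC (le_trans ha (le_trans h1 h2)) h3 hb
  linarith

end Wlemmas



lemma pS_interp {z : ℝ → ℝ} {r r' η : ℝ} {t : ℕ → ℝ} {n : ℕ}
    (hr : 0 < r) (hrr : r ≤ r') (hη : 0 ≤ η)
    (hinc : ∀ i < n, |z (t (i+1)) - z (t i)| ≤ η) :
    pS z r' t n ≤ η ^ (r' - r) * pS z r t n := by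
  unfold pS
  rw [Finset.mul_sum]
  apply Finset.sum_le_sum
  intro i hi
  simp only [Finset.mem_range] at hi
  have habs : (0:ℝ) ≤ |z (t (i+1)) - z (t i)| := abs_nonneg _
  have h1 : |z (t (i+1)) - z (t i)| ^ r' =
      |z (t (i+1)) - z (t i)| ^ (r' - r) * |z (t (i+1)) - z (t i)| ^ r := by
    rw [← Real.rpow_add' habs (by linarith)]
    ring_nf
  rw [h1]
  apply mul_le_mul_of_nonneg_right _ (Real.rpow_nonneg habs r)
  exact Real.rpow_le_rpow habs (hinc i hi) (by linarith)

lemma sum_range_rpow_le_tsum {θ : ℝ} (hθ : 1 < θ) (M : ℕ) :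
    ∑ m ∈ Finset.range M, ((1:ℝ)/((m:ℝ)+1)) ^ θ ≤ ∑' m : ℕ, ((1:ℝ)/((m:ℝ)+1)) ^ θ := by
  have hsum : Summable (fun m : ℕ => ((1:ℝ)/((m:ℝ)+1)) ^ θ) := by
    have h0 : Summable (fun n : ℕ => 1 / (n:ℝ) ^ θ) := Real.summable_one_div_nat_rpow.mpr hθ
    have h1 : Summable (fun n : ℕ => 1 / ((n:ℝ)+1) ^ θ) := by
      have := (summable_nat_add_iff (f := fun n : ℕ => 1 / (n:ℝ) ^ θ) 1).mpr h0
      simpa [Nat.cast_add] using this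
    apply h1.congr
    intro n
    rw [Real.div_rpow (by norm_num) (by positivity), Real.one_rpow]
  exact Summable.sum_le_tsum _ (fun m _ => Real.rpow_nonneg (by positivity) _) hsum

lemma tsum_rpow_nonneg (θ : ℝ) : 0 ≤ ∑' m : ℕ, ((1:ℝ)/((m:ℝ)+1)) ^ θ :=
  tsum_nonneg fun m => Real.rpow_nonneg (by positivity) _



lemma remove_monotone {t : ℕ → ℝ} (ht : Monotone t) (k : ℕ) :
    Monotone (fun i => if i < k then t i else t (i+1)) := by
  apply monotone_nat_of_le_succ
  intro i
  by_cases h1 : i + 1 < k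
  · simp only [if_pos h1, if_pos (Nat.lt_of_succ_lt h1)]; exact ht (by omega)
  · by_cases h2 : i < k
    · simp only [if_pos h2, if_neg h1]; exact ht (by omega)
    · simp only [if_neg h2, if_neg h1]; exact ht (by omega)

lemma RSn_remove (y x : ℝ → ℝ) {t : ℕ → ℝ} {n k : ℕ} (hk1 : 1 ≤ k) (hk2 : k ≤ n + 1) :
    RSn y x t (n+2) = RSn y x (fun i => if i < k then t i else t (i+1)) (n+1)
      + (y (t k) - y (t (k-1))) * (x (t (k+1)) - x (t k)) := by
  set f : ℕ → ℝ := fun i => y (t i) * (x (t (i+1)) - x (t i)) with hf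
  set t' : ℕ → ℝ := fun i => if i < k then t i else t (i+1) with ht'
  set f' : ℕ → ℝ := fun i => y (t' i) * (x (t' (i+1)) - x (t' i)) with hf'
  have key : RSn y x (fun i => if i < k then t i else t (i+1)) (n+1) =
      ∑ i ∈ Finset.range (n+1), f' i := by
    rw [RSn]
  have e1 : RSn y x t (n+2) = ∑ i ∈ Finset.Ico 0 (k-1), f i + (f (k-1) + f k)
      + ∑ i ∈ Finset.Ico (k+1) (n+2), f i := by
    have s1 : ∑ i ∈ Finset.Ico 0 (k+1), f i + ∑ i ∈ Finset.Ico (k+1) (n+2), f i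
        = ∑ i ∈ Finset.Ico 0 (n+2), f i := Finset.sum_Ico_consecutive f (by omega) (by omega)
    have s2 : ∑ i ∈ Finset.Ico 0 (k+1), f i = ∑ i ∈ Finset.Ico 0 k, f i + f k :=
      Finset.sum_Ico_succ_top (by omega) f
    have s3 : ∑ i ∈ Finset.Ico 0 k, f i = ∑ i ∈ Finset.Ico 0 (k-1), f i + f (k-1) := by
      have : k = (k-1) + 1 := by omega
      rw [this]
      exact Finset.sum_Ico_succ_top (by omega) f
    have : RSn y x t (n+2) = ∑ i ∈ Finset.Ico 0 (n+2), f i := by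
      rw [RSn, Finset.range_eq_Ico]
    rw [this, ← s1, s2, s3]; ring
  have e2 : ∑ i ∈ Finset.range (n+1), f' i = ∑ i ∈ Finset.Ico 0 (k-1), f i
      + f' (k-1) + ∑ i ∈ Finset.Ico (k+1) (n+2), f i := by
    rw [Finset.range_eq_Ico]
    have s1 : ∑ i ∈ Finset.Ico 0 k, f' i + ∑ i ∈ Finset.Ico k (n+1), f' i
        = ∑ i ∈ Finset.Ico 0 (n+1), f' i := Finset.sum_Ico_consecutive f' (by omega) (by omega)
    have s2 : ∑ i ∈ Finset.Ico 0 k, f' i = ∑ i ∈ Finset.Ico 0 (k-1), f' i + f' (k-1) := by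
      have : k = (k-1) + 1 := by omega
      rw [this]
      exact Finset.sum_Ico_succ_top (by omega) f'
    have s3 : ∑ i ∈ Finset.Ico 0 (k-1), f' i = ∑ i ∈ Finset.Ico 0 (k-1), f i := by
      apply Finset.sum_congr rfl
      intro i hi
      simp only [Finset.mem_Ico] at hi
      have h1 : i < k := by omega
      have h2 : i + 1 < k := by omega
      simp only [hf', ht', hf, if_pos h1, if_pos h2]
    have s4 : ∑ i ∈ Finset.Ico k (n+1), f' i = ∑ i ∈ Finset.Ico (k+1) (n+2), f i := by
      rw [Finset.sum_Ico_eq_sum_range, Finset.sum_Ico_eq_sum_range]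
      have hlen : n + 1 - k = n + 2 - (k + 1) := by omega
      rw [← hlen]
      apply Finset.sum_congr rfl
      intro j _
      have h1 : ¬ (k + j < k) := by omega
      have h2 : ¬ (k + j + 1 < k) := by omega
      simp only [hf', ht', hf, if_neg h1, if_neg h2]
      have e1 : k + j + 1 = k + 1 + j := by omega
      rw [e1]
    rw [← s1, s2, s3, s4]
  rw [key, e1, e2]
  have hfk1 : f (k-1) = y (t (k-1)) * (x (t k) - x (t (k-1))) := by
    have e : k - 1 + 1 = k := by omega
    simp only [hf, e]
  have hf'k1 : f' (k-1) = y (t (k-1)) * (x (t (k+1)) - x (t (k-1))) := by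
    have h1 : k - 1 < k := by omega
    have h2 : ¬ (k - 1 + 1 < k) := by omega
    have e : k - 1 + 1 = k := by omega
    simp only [hf', ht', if_pos h1, if_neg h2, e, lt_self_iff_false, if_false]
  rw [hfk1, hf'k1, hf]
  ring

section YL

variable {x y : ℝ → ℝ} {ω : ℝ → ℝ → ℝ} {θ α β : ℝ}

lemma omega_chain
    (hω0 : ∀ {a b : ℝ}, 0 ≤ a → a ≤ b → b ≤ 1 → 0 ≤ ω a b)
    (hωs : ∀ {a c b : ℝ}, 0 ≤ a → a ≤ c → c ≤ b → b ≤ 1 → ω a c + ω c b ≤ ω a b)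
    {t : ℕ → ℝ} (ht : Monotone t) {n : ℕ} (h0 : 0 ≤ t 0) (hn : t n ≤ 1) :
    ∑ i ∈ Finset.range n, ω (t i) (t (i+1)) ≤ ω (t 0) (t n) := by
  induction n with
  | zero => simpa using hω0 h0 le_rfl hn
  | succ n ih =>
    have hn' : t n ≤ 1 := le_trans (ht (Nat.le_succ n)) hn
    rw [Finset.sum_range_succ]
    calc _ ≤ ω (t 0) (t n) + ω (t n) (t (n+1)) := add_le_add_left (ih hn') _
      _ ≤ _ := hωs h0 (ht (Nat.zero_le n)) (ht (Nat.le_succ n)) hn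

lemma young_loeve
    (hα : 0 < α) (hβ : 0 < β) (hαβ : α + β = θ)
    (hω0 : ∀ {a b : ℝ}, 0 ≤ a → a ≤ b → b ≤ 1 → 0 ≤ ω a b)
    (hωs : ∀ {a c b : ℝ}, 0 ≤ a → a ≤ c → c ≤ b → b ≤ 1 → ω a c + ω c b ≤ ω a b)
    (hωx : ∀ {u v : ℝ}, 0 ≤ u → u ≤ v → v ≤ 1 → |x v - x u| ≤ ω u v ^ α)
    (hωy : ∀ {u v : ℝ}, 0 ≤ u → u ≤ v → v ≤ 1 → |y v - y u| ≤ ω u v ^ β) :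
    ∀ (n : ℕ) (t : ℕ → ℝ), Monotone t → 0 ≤ t 0 → t n ≤ 1 →
      |RSn y x t n - y (t 0) * (x (t n) - x (t 0))| ≤
        ∑ m ∈ Finset.range (n-1), (2 * ω (t 0) (t n) / ((m:ℝ)+1)) ^ θ := by
  intro n
  induction n using Nat.strong_induction_on with
  | _ n ih =>
  match n with
  | 0 => intro t ht h0 hn; simp [RSn]
  | 1 => intro t ht h0 hn; simp [RSn]
  | (n+2) =>
    intro t ht h0 hn
    set A := ω (t 0) (t (n+2)) with hA
    -- pick the minimizing interior point
    set g : ℕ → ℝ := fun k => ω (t (k-1)) (t k) + ω (t k) (t (k+1)) with hg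
    obtain ⟨k, hkS, hkmin⟩ := (Finset.Icc 1 (n+1)).exists_min_image g
      ⟨1, by simp⟩
    rw [Finset.mem_Icc] at hkS
    obtain ⟨hk1, hk2⟩ := hkS
    -- basic point bounds
    have htle : ∀ {i j : ℕ}, i ≤ j → t i ≤ t j := fun h => ht h
    have hti0 : ∀ i, 0 ≤ t i := fun i => le_trans h0 (htle (Nat.zero_le i))
    have hti1 : ∀ {i}, i ≤ n+2 → t i ≤ 1 := fun h => le_trans (htle h) hn
    -- sum bounds for g
    have hchain : ∑ i ∈ Finset.range (n+2), ω (t i) (t (i+1)) ≤ A :=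
      omega_chain (fun h1 h2 h3 => hω0 h1 h2 h3) (fun h1 h2 h3 h4 => hωs h1 h2 h3 h4) ht h0 hn
    have hωnn : ∀ {i j : ℕ}, i ≤ j → j ≤ n + 2 → 0 ≤ ω (t i) (t j) :=
      fun hij hj => hω0 (hti0 _) (htle hij) (hti1 hj)
    have hA1 : ∑ k ∈ Finset.Icc 1 (n+1), ω (t (k-1)) (t k) ≤ A := by
      have : Finset.Icc 1 (n+1) = Finset.Ico 1 (n+2) := rfl
      rw [this, Finset.sum_Ico_eq_sum_range]
      have hre : ∀ j ∈ Finset.range (n+2-1), ω (t (1+j-1)) (t (1+j)) = ω (t j) (t (j+1)) := by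
        intro j _
        have e1 : 1 + j - 1 = j := by omega
        have e2 : 1 + j = j + 1 := by omega
        rw [e1, e2]
      rw [Finset.sum_congr rfl hre]
      refine le_trans (Finset.sum_le_sum_of_subset_of_nonneg ?_ ?_) hchain
      · apply Finset.range_subset_range.mpr; omega
      · intro i hi _
        simp only [Finset.mem_range] at hi
        exact hωnn (Nat.le_succ i) (by omega)
    have hA2 : ∑ k ∈ Finset.Icc 1 (n+1), ω (t k) (t (k+1)) ≤ A := by
      have : Finset.Icc 1 (n+1) = Finset.Ico 1 (n+2) := rfl
      rw [this, Finset.sum_Ico_eq_sum_range]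
      have : ∑ j ∈ Finset.range (n+2-1), ω (t (1+j)) (t (1+j+1))
          ≤ ∑ i ∈ Finset.range (n+2), ω (t i) (t (i+1)) := by
        rw [Finset.sum_range_succ' (fun i => ω (t i) (t (i+1))) (n+1)]
        have e : ∀ j, 1 + j = j + 1 := fun j => by omega
        apply le_add_of_le_of_nonneg
        · apply le_of_eq
          apply Finset.sum_congr (by norm_num)
          intro j _
          rw [e j]
        · exact hωnn (Nat.zero_le 1) (by omega)
      exact le_trans this hchain
    have hcard : ((n:ℝ)+1) * g k ≤ 2 * A := by
      have h1 : (Finset.Icc 1 (n+1)).card • g k ≤ ∑ k' ∈ Finset.Icc 1 (n+1), g k' :=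
        Finset.card_nsmul_le_sum _ _ _ hkmin
      have h2 : (Finset.Icc 1 (n+1)).card = n + 1 := by
        rw [Nat.card_Icc]; omega
      rw [h2, nsmul_eq_mul] at h1
      have h3 : ∑ k' ∈ Finset.Icc 1 (n+1), g k' ≤ 2 * A := by
        rw [hg, Finset.sum_add_distrib]
        linarith [hA1, hA2]
      calc ((n:ℝ)+1) * g k = ((n+1 : ℕ) : ℝ) * g k := by push_cast; ring
        _ ≤ ∑ k' ∈ Finset.Icc 1 (n+1), g k' := h1
        _ ≤ 2 * A := h3
    have hgk0 : 0 ≤ g k := add_nonneg (hωnn (by omega) (by omega)) (hωnn (by omega) (by omega))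
    have hgkA : g k ≤ 2 * A / ((n:ℝ)+1) := by
      rw [le_div_iff₀ (by positivity)]
      linarith [hcard]
    -- the removed-point error
    have hθ0 : (0:ℝ) < θ := by rw [← hαβ]; positivity
    have hE : |(y (t k) - y (t (k-1))) * (x (t (k+1)) - x (t k))|
        ≤ (2 * A / ((n:ℝ)+1)) ^ θ := by
      have hy' : |y (t k) - y (t (k-1))| ≤ g k ^ β := by
        refine le_trans (hωy (hti0 _) (htle (by omega)) (hti1 (by omega))) ?_
        apply Real.rpow_le_rpow (hωnn (by omega) (by omega)) ?_ (le_of_lt hβ)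
        rw [hg]
        simp only
        have := hωnn (le_refl k) (by omega)
        nlinarith [hωnn (Nat.le_succ k) (by omega : k + 1 ≤ n + 2)]
      have hx' : |x (t (k+1)) - x (t k)| ≤ g k ^ α := by
        refine le_trans (hωx (hti0 _) (htle (by omega)) (hti1 (by omega))) ?_
        apply Real.rpow_le_rpow (hωnn (by omega) (by omega)) ?_ (le_of_lt hα)
        rw [hg]
        simp only
        nlinarith [hωnn (by omega : k - 1 ≤ k) (by omega : k ≤ n + 2)]
      calc |(y (t k) - y (t (k-1))) * (x (t (k+1)) - x (t k))|
          = |y (t k) - y (t (k-1))| * |x (t (k+1)) - x (t k)| := abs_mul _ _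
        _ ≤ g k ^ β * g k ^ α := by
            apply mul_le_mul hy' hx' (abs_nonneg _) (Real.rpow_nonneg hgk0 _)
        _ = g k ^ θ := by
            rw [← Real.rpow_add' hgk0 (by rw [add_comm] at hαβ; rw [hαβ]; linarith)]
            rw [add_comm] at hαβ; rw [hαβ]
        _ ≤ (2 * A / ((n:ℝ)+1)) ^ θ := Real.rpow_le_rpow hgk0 hgkA (le_of_lt hθ0)
    -- the reduced partition
    set t' : ℕ → ℝ := fun i => if i < k then t i else t (i+1) with ht'def
    have ht' : Monotone t' := remove_monotone ht k
    have h0' : t' 0 = t 0 := if_pos (by omega)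
    have hn' : t' (n+1) = t (n+2) := by
      have : ¬ (n + 1 < k) := by omega
      simp only [ht'def, if_neg this]
    have IH := ih (n+1) (by omega) t' ht' (by rw [h0']; exact h0) (by rw [hn']; exact hn)
    rw [h0', hn'] at IH
    -- combine
    have hrem := RSn_remove y x (t := t) hk1 hk2
    rw [← ht'def] at hrem
    have habs : |RSn y x t (n+2) - y (t 0) * (x (t (n+2)) - x (t 0))|
        ≤ |RSn y x t' (n+1) - y (t 0) * (x (t (n+2)) - x (t 0))|
          + |(y (t k) - y (t (k-1))) * (x (t (k+1)) - x (t k))| := by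
      rw [hrem]
      calc |RSn y x t' (n+1) + (y (t k) - y (t (k-1))) * (x (t (k+1)) - x (t k))
            - y (t 0) * (x (t (n+2)) - x (t 0))|
          = |(RSn y x t' (n+1) - y (t 0) * (x (t (n+2)) - x (t 0)))
            + (y (t k) - y (t (k-1))) * (x (t (k+1)) - x (t k))| := by ring_nf
        _ ≤ _ := abs_add_le _ _
    have hfin : (n+2-1) = n+1 := rfl
    rw [hfin, Finset.sum_range_succ]
    have : ((n:ℝ)+1) = ((n:ℕ):ℝ)+1 := by norm_num
    calc |RSn y x t (n+2) - y (t 0) * (x (t (n+2)) - x (t 0))|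
        ≤ |RSn y x t' (n+1) - y (t 0) * (x (t (n+2)) - x (t 0))|
          + |(y (t k) - y (t (k-1))) * (x (t (k+1)) - x (t k))| := habs
      _ ≤ (∑ m ∈ Finset.range n, (2 * A / ((m:ℝ)+1)) ^ θ) + (2 * A / ((n:ℝ)+1)) ^ θ := by
          apply add_le_add _ hE
          simpa using IH
      _ = _ := by norm_num

end YL

section Blocks

variable {x y : ℝ → ℝ} {ω : ℝ → ℝ → ℝ} {θ α β : ℝ}

lemma young_loeve_sum_le (hθ : 1 < θ) {A : ℝ} (hA : 0 ≤ A) (M : ℕ) :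
    ∑ m ∈ Finset.range M, (2 * A / ((m:ℝ)+1)) ^ θ
      ≤ (2:ℝ) ^ θ * (∑' m : ℕ, ((1:ℝ)/((m:ℝ)+1)) ^ θ) * A ^ θ := by
  have h1 : ∀ m : ℕ, (2 * A / ((m:ℝ)+1)) ^ θ
      = ((2:ℝ) ^ θ * A ^ θ) * ((1:ℝ)/((m:ℝ)+1)) ^ θ := by
    intro m
    rw [div_eq_mul_one_div (2*A) ((m:ℝ)+1),
      Real.mul_rpow (by positivity) (by positivity), Real.mul_rpow (by norm_num) hA]
  calc ∑ m ∈ Finset.range M, (2 * A / ((m:ℝ)+1)) ^ θ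
      = ((2:ℝ)^θ * A^θ) * ∑ m ∈ Finset.range M, ((1:ℝ)/((m:ℝ)+1)) ^ θ := by
        rw [Finset.mul_sum]; exact Finset.sum_congr rfl (fun m _ => h1 m)
    _ ≤ ((2:ℝ)^θ * A^θ) * ∑' m : ℕ, ((1:ℝ)/((m:ℝ)+1)) ^ θ := by
        apply mul_le_mul_of_nonneg_left (sum_range_rpow_le_tsum hθ M) (by positivity)
    _ = _ := by ring

lemma young_loeve' (hθ : 1 < θ)
    (hα : 0 < α) (hβ : 0 < β) (hαβ : α + β = θ)
    (hω0 : ∀ {a b : ℝ}, 0 ≤ a → a ≤ b → b ≤ 1 → 0 ≤ ω a b)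
    (hωs : ∀ {a c b : ℝ}, 0 ≤ a → a ≤ c → c ≤ b → b ≤ 1 → ω a c + ω c b ≤ ω a b)
    (hωx : ∀ {u v : ℝ}, 0 ≤ u → u ≤ v → v ≤ 1 → |x v - x u| ≤ ω u v ^ α)
    (hωy : ∀ {u v : ℝ}, 0 ≤ u → u ≤ v → v ≤ 1 → |y v - y u| ≤ ω u v ^ β)
    {n : ℕ} {t : ℕ → ℝ} (ht : Monotone t) (h0 : 0 ≤ t 0) (hn : t n ≤ 1) :
    |RSn y x t n - y (t 0) * (x (t n) - x (t 0))| ≤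
      (2:ℝ) ^ θ * (∑' m : ℕ, ((1:ℝ)/((m:ℝ)+1)) ^ θ) * ω (t 0) (t n) ^ θ := by
  refine le_trans (young_loeve hα hβ hαβ (fun h1 h2 h3 => hω0 h1 h2 h3)
    (fun h1 h2 h3 h4 => hωs h1 h2 h3 h4) (fun h1 h2 h3 => hωx h1 h2 h3)
    (fun h1 h2 h3 => hωy h1 h2 h3) n t ht h0 hn) ?_
  exact young_loeve_sum_le hθ (hω0 h0 (ht (Nat.zero_le n)) hn) _

lemma RSn_φ_split (y x : ℝ → ℝ) (u : ℕ → ℝ) {φ : ℕ → ℕ} (hφ : Monotone φ) (hφ0 : φ 0 = 0)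
    (n : ℕ) :
    RSn y x u (φ n) = ∑ i ∈ Finset.range n,
      ∑ j ∈ Finset.Ico (φ i) (φ (i+1)), y (u j) * (x (u (j+1)) - x (u j)) := by
  induction n with
  | zero => simp [RSn, hφ0]
  | succ n ih =>
    rw [Finset.sum_range_succ, ← ih, RSn, RSn, Finset.range_eq_Ico, Finset.range_eq_Ico]
    exact (Finset.sum_Ico_consecutive (fun j => y (u j) * (x (u (j+1)) - x (u j))) (Nat.zero_le _) (hφ (Nat.le_succ n))).symm

lemma block_eq_RSn (y x : ℝ → ℝ) (u : ℕ → ℝ) {a b : ℕ} (hab : a ≤ b) :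
    RSn y x (fun j => u (min (a + j) b)) (b - a)
      = ∑ j ∈ Finset.Ico a b, y (u j) * (x (u (j+1)) - x (u j)) := by
  rw [Finset.sum_Ico_eq_sum_range, RSn]
  apply Finset.sum_congr rfl
  intro j hj
  simp only [Finset.mem_range] at hj
  beta_reduce
  have h1 : min (a + j) b = a + j := min_eq_left (by omega)
  have h2 : min (a + (j+1)) b = a + j + 1 := min_eq_left (by omega)
  rw [h1, h2]

lemma blocks_est (hθ : 1 < θ)
    (hα : 0 < α) (hβ : 0 < β) (hαβ : α + β = θ)
    (hω0 : ∀ {a b : ℝ}, 0 ≤ a → a ≤ b → b ≤ 1 → 0 ≤ ω a b)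
    (hωs : ∀ {a c b : ℝ}, 0 ≤ a → a ≤ c → c ≤ b → b ≤ 1 → ω a c + ω c b ≤ ω a b)
    (hωx : ∀ {u v : ℝ}, 0 ≤ u → u ≤ v → v ≤ 1 → |x v - x u| ≤ ω u v ^ α)
    (hωy : ∀ {u v : ℝ}, 0 ≤ u → u ≤ v → v ≤ 1 → |y v - y u| ≤ ω u v ^ β)
    {t u : ℕ → ℝ} {φ : ℕ → ℕ} {n : ℕ}
    (ht : Monotone t) (hu : Monotone u) (hφ : Monotone φ) (hφ0 : φ 0 = 0)
    (hcomp : ∀ i ≤ n, u (φ i) = t i) (h0 : 0 ≤ t 0) (hn : t n ≤ 1) :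
    |RSn y x u (φ n) - RSn y x t n| ≤ ∑ i ∈ Finset.range n,
      (2:ℝ) ^ θ * (∑' m : ℕ, ((1:ℝ)/((m:ℝ)+1)) ^ θ) * ω (t i) (t (i+1)) ^ θ := by
  rw [RSn_φ_split y x u hφ hφ0 n]
  have hRS : RSn y x t n = ∑ i ∈ Finset.range n, y (t i) * (x (t (i+1)) - x (t i)) := rfl
  rw [hRS, ← Finset.sum_sub_distrib]
  refine le_trans (Finset.abs_sum_le_sum_abs _ _) (Finset.sum_le_sum ?_)
  intro i hi
  simp only [Finset.mem_range] at hi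
  set s : ℕ → ℝ := fun j => u (min (φ i + j) (φ (i+1))) with hs
  have hsmono : Monotone s := by
    intro j k hjk
    exact hu (min_le_min (by omega) le_rfl)
  have hs0 : s 0 = t i := by
    simp only [hs, Nat.add_zero, min_eq_left (hφ (Nat.le_succ i))]
    exact hcomp i (le_of_lt hi)
  have hsN : s (φ (i+1) - φ i) = t (i+1) := by
    have : min (φ i + (φ (i+1) - φ i)) (φ (i+1)) = φ (i+1) := by
      have := hφ (Nat.le_succ i); omega
    simp only [hs, this]
    exact hcomp (i+1) hi
  have hblock := block_eq_RSn y x u (hφ (Nat.le_succ i))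
  rw [← hblock]
  have h0' : 0 ≤ s 0 := by rw [hs0]; exact le_trans h0 (ht (Nat.zero_le i))
  have hn' : s (φ (i+1) - φ i) ≤ 1 := by
    rw [hsN]; exact le_trans (ht hi) hn
  have := young_loeve' hθ hα hβ hαβ (fun h1 h2 h3 => hω0 h1 h2 h3)
    (fun h1 h2 h3 h4 => hωs h1 h2 h3 h4) (fun h1 h2 h3 => hωx h1 h2 h3)
    (fun h1 h2 h3 => hωy h1 h2 h3) hsmono h0' hn'
  rw [hs0, hsN] at this
  exact this

end Blocks


lemma exists_common_refinement {n1 n2 : ℕ} {t1 t2 : ℕ → ℝ}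
    (ht1 : Monotone t1) (h10 : t1 0 = 0) (h1n : t1 n1 = 1)
    (ht2 : Monotone t2) (h20 : t2 0 = 0) (h2n : t2 n2 = 1) :
    ∃ (u : ℕ → ℝ) (φ1 φ2 : ℕ → ℕ), Monotone u ∧ Monotone φ1 ∧ Monotone φ2 ∧
      φ1 0 = 0 ∧ φ2 0 = 0 ∧ φ1 n1 = φ2 n2 ∧
      (∀ i ≤ n1, u (φ1 i) = t1 i) ∧ (∀ i ≤ n2, u (φ2 i) = t2 i) := by
  classical
  set F : Finset ℝ := ((Finset.range (n1+1)).image t1) ∪ ((Finset.range (n2+1)).image t2)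
    with hF
  have hmem1 : ∀ i, t1 (min i n1) ∈ F := by
    intro i
    apply Finset.mem_union_left
    exact Finset.mem_image.mpr ⟨min i n1, Finset.mem_range.mpr (by omega), rfl⟩
  have hmem2 : ∀ i, t2 (min i n2) ∈ F := by
    intro i
    apply Finset.mem_union_right
    exact Finset.mem_image.mpr ⟨min i n2, Finset.mem_range.mpr (by omega), rfl⟩
  have helem : ∀ v ∈ F, 0 ≤ v ∧ v ≤ 1 := by
    intro v hv
    rw [hF, Finset.mem_union, Finset.mem_image, Finset.mem_image] at hv
    rcases hv with ⟨i, hi, rfl⟩ | ⟨i, hi, rfl⟩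
    · rw [Finset.mem_range] at hi
      exact ⟨h10 ▸ ht1 (Nat.zero_le i), h1n ▸ ht1 (by omega)⟩
    · rw [Finset.mem_range] at hi
      exact ⟨h20 ▸ ht2 (Nat.zero_le i), h2n ▸ ht2 (by omega)⟩
  set iso := F.orderIsoOfFin rfl with hiso
  set u : ℕ → ℝ := fun j => if h : j < F.card then (iso ⟨j, h⟩ : ℝ) else 1 with hu
  have humono : Monotone u := by
    intro j k hjk
    by_cases hk : k < F.card
    · have hj : j < F.card := lt_of_le_of_lt hjk hk
      rw [hu]
      simp only [dif_pos hj, dif_pos hk]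
      exact Subtype.coe_le_coe.mpr (iso.monotone (by exact hjk))
    · rw [hu]
      simp only [dif_neg hk]
      by_cases hj : j < F.card
      · simp only [dif_pos hj]
        exact (helem _ (iso ⟨j, hj⟩).2).2
      · simp only [dif_neg hj]; exact le_rfl
  set φ1 : ℕ → ℕ := fun i => ((iso.symm ⟨t1 (min i n1), hmem1 i⟩ : Fin F.card) : ℕ) with hφ1
  set φ2 : ℕ → ℕ := fun i => ((iso.symm ⟨t2 (min i n2), hmem2 i⟩ : Fin F.card) : ℕ) with hφ2
  have hφ1mono : Monotone φ1 := by
    intro i j hij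
    have : t1 (min i n1) ≤ t1 (min j n1) := ht1 (by omega)
    exact iso.symm.monotone (Subtype.mk_le_mk.mpr this)
  have hφ2mono : Monotone φ2 := by
    intro i j hij
    have : t2 (min i n2) ≤ t2 (min j n2) := ht2 (by omega)
    exact iso.symm.monotone (Subtype.mk_le_mk.mpr this)
  have hval : ∀ (v : ℝ) (hv : v ∈ F), u ((iso.symm ⟨v, hv⟩ : Fin F.card) : ℕ) = v := by
    intro v hv
    rw [hu]
    have hlt : ((iso.symm ⟨v, hv⟩ : Fin F.card) : ℕ) < F.card := (iso.symm ⟨v, hv⟩).isLt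
    simp only [dif_pos hlt]
    have : (⟨((iso.symm ⟨v, hv⟩ : Fin F.card) : ℕ), hlt⟩ : Fin F.card) = iso.symm ⟨v, hv⟩ :=
      Fin.eta _ _
    rw [this, OrderIso.apply_symm_apply]
  have hcomp1 : ∀ i ≤ n1, u (φ1 i) = t1 i := by
    intro i hi
    rw [hφ1]
    simp only
    rw [hval _ (hmem1 i), min_eq_left hi]
  have hcomp2 : ∀ i ≤ n2, u (φ2 i) = t2 i := by
    intro i hi
    rw [hφ2]
    simp only
    rw [hval _ (hmem2 i), min_eq_left hi]
  have hcard0 : 0 < F.card := Finset.card_pos.mpr ⟨_, hmem1 0⟩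
  have hφ10 : φ1 0 = 0 := by
    set a := (iso.symm ⟨t1 (min 0 n1), hmem1 0⟩ : Fin F.card) with ha
    set b : Fin F.card := ⟨0, hcard0⟩ with hb
    have hba : b ≤ a := Fin.mk_le_of_le_val (Nat.zero_le _)
    have h1 : (iso b : ℝ) ≤ (iso a : ℝ) := Subtype.coe_le_coe.mpr (iso.monotone hba)
    have h2 : (iso a : ℝ) = t1 (min 0 n1) := by rw [ha, OrderIso.apply_symm_apply]
    have h3 : t1 (min 0 n1) = 0 := by rw [Nat.min_eq_left (Nat.zero_le n1), h10]
    have h4 : (0:ℝ) ≤ (iso b : ℝ) := (helem _ (iso b).2).1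
    have h5 : (iso b : ℝ) = (iso a : ℝ) := le_antisymm h1 (by rw [h2, h3]; exact h4)
    have h6 : b = a := iso.injective (Subtype.ext h5)
    rw [hφ1]
    simp only
    rw [← ha, ← h6]
  have hφ20 : φ2 0 = 0 := by
    set a := (iso.symm ⟨t2 (min 0 n2), hmem2 0⟩ : Fin F.card) with ha
    set b : Fin F.card := ⟨0, hcard0⟩ with hb
    have hba : b ≤ a := Fin.mk_le_of_le_val (Nat.zero_le _)
    have h1 : (iso b : ℝ) ≤ (iso a : ℝ) := Subtype.coe_le_coe.mpr (iso.monotone hba)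
    have h2 : (iso a : ℝ) = t2 (min 0 n2) := by rw [ha, OrderIso.apply_symm_apply]
    have h3 : t2 (min 0 n2) = 0 := by rw [Nat.min_eq_left (Nat.zero_le n2), h20]
    have h4 : (0:ℝ) ≤ (iso b : ℝ) := (helem _ (iso b).2).1
    have h5 : (iso b : ℝ) = (iso a : ℝ) := le_antisymm h1 (by rw [h2, h3]; exact h4)
    have h6 : b = a := iso.injective (Subtype.ext h5)
    rw [hφ2]
    simp only
    rw [← ha, ← h6]
  have hφeq : φ1 n1 = φ2 n2 := by
    rw [hφ1, hφ2]
    simp only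
    have he : (⟨t1 (min n1 n1), hmem1 n1⟩ : {v // v ∈ F}) = ⟨t2 (min n2 n2), hmem2 n2⟩ := by
      apply Subtype.ext
      simp only [Nat.min_self]
      rw [h1n, h2n]
    rw [he]
  exact ⟨u, φ1, φ2, humono, hφ1mono, hφ2mono, hφ10, hφ20, hφeq, hcomp1, hcomp2⟩


lemma W_interp_le {z : ℝ → ℝ} {r r' C η a b : ℝ}
    (hC : ∀ S ∈ WSet z r 0 1, S ≤ C)
    (hr : 0 < r) (hrr : r ≤ r') (hη : 0 ≤ η)
    (ha : 0 ≤ a) (hab : a ≤ b) (hb : b ≤ 1)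
    (hloc : ∀ u v : ℝ, a ≤ u → u ≤ v → v ≤ b → |z v - z u| ≤ η) :
    W z r' a b ≤ η ^ (r' - r) * C := by
  apply csSup_le (WSet_nonempty hab)
  rintro S ⟨n, t, ht, h0, hn, rfl⟩
  have hmem : pS z r t n ∈ WSet z r a b := ⟨n, t, ht, h0, hn, rfl⟩
  have h1 : pS z r' t n ≤ η ^ (r' - r) * pS z r t n := by
    apply pS_interp hr hrr hη
    intro i hi
    exact hloc _ _ (h0 ▸ ht (Nat.zero_le i)) (ht (Nat.le_succ i)) (hn ▸ ht (by omega))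
  exact le_trans h1
    (mul_le_mul_of_nonneg_left (WSet_le_of_global hC ha hb hmem) (Real.rpow_nonneg hη _))

section Limit

variable {x y : ℝ → ℝ} {ω : ℝ → ℝ → ℝ} {θ α β : ℝ}

lemma exists_limit (hθ : 1 < θ) (hα : 0 < α) (hβ : 0 < β) (hαβ : α + β = θ)
    (hω0 : ∀ {a b : ℝ}, 0 ≤ a → a ≤ b → b ≤ 1 → 0 ≤ ω a b)
    (hωs : ∀ {a c b : ℝ}, 0 ≤ a → a ≤ c → c ≤ b → b ≤ 1 → ω a c + ω c b ≤ ω a b)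
    (hωx : ∀ {u v : ℝ}, 0 ≤ u → u ≤ v → v ≤ 1 → |x v - x u| ≤ ω u v ^ α)
    (hωy : ∀ {u v : ℝ}, 0 ≤ u → u ≤ v → v ≤ 1 → |y v - y u| ≤ ω u v ^ β)
    (hsmall : ∀ ε > (0:ℝ), ∃ δ > (0:ℝ), ∀ a b : ℝ,
      0 ≤ a → a ≤ b → b ≤ 1 → b - a < δ → ω a b ≤ ε) :
    ∃ I : ℝ, ∀ ε > (0:ℝ), ∃ δ > (0:ℝ), ∀ (n : ℕ) (t : ℕ → ℝ),
      Monotone t → t 0 = 0 → t n = 1 →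
      (∀ i < n, t (i+1) - t i < δ) → |RSn y x t n - I| < ε := by
  set Z := ∑' m : ℕ, ((1:ℝ)/((m:ℝ)+1)) ^ θ with hZ
  set K := (2:ℝ)^θ * Z with hK
  have hK0 : 0 ≤ K := mul_nonneg (Real.rpow_nonneg (by norm_num) _) (tsum_rpow_nonneg θ)
  have hω01 : 0 ≤ ω 0 1 := hω0 le_rfl zero_le_one le_rfl
  -- pairwise comparison of partitions with small mesh
  have hcomp2 : ∀ ε > (0:ℝ), ∃ δ > (0:ℝ), ∀ (n1 : ℕ) (t1 : ℕ → ℝ) (n2 : ℕ) (t2 : ℕ → ℝ),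
      Monotone t1 → t1 0 = 0 → t1 n1 = 1 → (∀ i < n1, t1 (i+1) - t1 i < δ) →
      Monotone t2 → t2 0 = 0 → t2 n2 = 1 → (∀ i < n2, t2 (i+1) - t2 i < δ) →
      |RSn y x t1 n1 - RSn y x t2 n2| ≤ ε := by
    intro ε hε
    set B := ε / (2*(K * ω 0 1) + 1) with hB
    have hd0 : (0:ℝ) < 2*(K * ω 0 1) + 1 := by positivity
    have hB0 : 0 < B := div_pos hε hd0
    set ε' := min 1 (B ^ (1/(θ-1))) with hε'def
    have hε'0 : 0 < ε' := lt_min one_pos (Real.rpow_pos_of_pos hB0 _)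
    have hε'B : ε' ^ (θ-1) ≤ B := by
      have h1 : ε' ≤ B ^ (1/(θ-1)) := min_le_right _ _
      have h2 : (B ^ (1/(θ-1))) ^ (θ-1) = B := by
        rw [one_div]
        exact Real.rpow_inv_rpow (le_of_lt hB0) (by linarith)
      calc ε' ^ (θ-1) ≤ (B ^ (1/(θ-1))) ^ (θ-1) :=
            Real.rpow_le_rpow (le_of_lt hε'0) h1 (by linarith)
        _ = B := h2
    obtain ⟨δ, hδ0, hδ⟩ := hsmall ε' hε'0
    refine ⟨δ, hδ0, ?_⟩
    intro n1 t1 n2 t2 h1m h10 h1n h1mesh h2m h20 h2n h2mesh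
    obtain ⟨u, φ1, φ2, hum, hφ1m, hφ2m, hφ10, hφ20, hφeq, hc1, hc2⟩ :=
      exists_common_refinement h1m h10 h1n h2m h20 h2n
    have est : ∀ (n : ℕ) (t : ℕ → ℝ) (φ : ℕ → ℕ), Monotone t → t 0 = 0 → t n = 1 →
        (∀ i < n, t (i+1) - t i < δ) → Monotone φ → φ 0 = 0 → (∀ i ≤ n, u (φ i) = t i) →
        |RSn y x u (φ n) - RSn y x t n| ≤ K * (ε' ^ (θ-1) * ω 0 1) := by
      intro n t φ htm ht0 htn htmesh hφm hφ0 hc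
      have h00 : 0 ≤ t 0 := le_of_eq ht0.symm
      have hn1 : t n ≤ 1 := le_of_eq htn
      refine le_trans (blocks_est hθ hα hβ hαβ (fun h1 h2 h3 => hω0 h1 h2 h3)
        (fun h1 h2 h3 h4 => hωs h1 h2 h3 h4) (fun h1 h2 h3 => hωx h1 h2 h3)
        (fun h1 h2 h3 => hωy h1 h2 h3) htm hum hφm hφ0 hc h00 hn1) ?_
      have hpt : ∀ i ∈ Finset.range n, (2:ℝ)^θ * Z * ω (t i) (t (i+1)) ^ θ
          ≤ K * (ε' ^ (θ-1) * ω (t i) (t (i+1))) := by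
        intro i hi
        simp only [Finset.mem_range] at hi
        have hii0 : 0 ≤ t i := le_trans h00 (htm (Nat.zero_le i))
        have hii : t i ≤ t (i+1) := htm (Nat.le_succ i)
        have hii1 : t (i+1) ≤ 1 := le_trans (htm (by omega : i+1 ≤ n)) hn1
        have hωi0 : 0 ≤ ω (t i) (t (i+1)) := hω0 hii0 hii hii1
        have hωiε : ω (t i) (t (i+1)) ≤ ε' := hδ _ _ hii0 hii hii1 (htmesh i hi)
        rw [← hK]
        apply mul_le_mul_of_nonneg_left _ hK0
        have he : θ - 1 + 1 = θ := by ring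
        calc ω (t i) (t (i+1)) ^ θ
            = ω (t i) (t (i+1)) ^ (θ-1) * ω (t i) (t (i+1)) ^ (1:ℝ) := by
              rw [← Real.rpow_add' hωi0 (by rw [he]; linarith)]
              rw [he]
          _ = ω (t i) (t (i+1)) ^ (θ-1) * ω (t i) (t (i+1)) := by rw [Real.rpow_one]
          _ ≤ ε' ^ (θ-1) * ω (t i) (t (i+1)) := by
              apply mul_le_mul_of_nonneg_right _ hωi0
              exact Real.rpow_le_rpow hωi0 hωiε (by linarith)
      refine le_trans (Finset.sum_le_sum hpt) ?_
      rw [← Finset.mul_sum, ← Finset.mul_sum]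
      have hchain : ∑ i ∈ Finset.range n, ω (t i) (t (i+1)) ≤ ω 0 1 := by
        have := omega_chain (fun h1 h2 h3 => hω0 h1 h2 h3)
          (fun h1 h2 h3 h4 => hωs h1 h2 h3 h4) htm h00 hn1
        rwa [ht0, htn] at this
      apply mul_le_mul_of_nonneg_left _ hK0
      exact mul_le_mul_of_nonneg_left hchain (Real.rpow_nonneg (le_of_lt hε'0) _)
    have e1 := est n1 t1 φ1 h1m h10 h1n h1mesh hφ1m hφ10 hc1
    have e2 := est n2 t2 φ2 h2m h20 h2n h2mesh hφ2m hφ20 hc2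
    rw [hφeq] at e1
    set a := RSn y x u (φ2 n2)
    have htri : |RSn y x t1 n1 - RSn y x t2 n2|
        ≤ |a - RSn y x t1 n1| + |a - RSn y x t2 n2| := by
      calc |RSn y x t1 n1 - RSn y x t2 n2|
          = |(RSn y x t1 n1 - a) + (a - RSn y x t2 n2)| := by ring_nf
        _ ≤ |RSn y x t1 n1 - a| + |a - RSn y x t2 n2| := abs_add_le _ _
        _ = _ := by rw [abs_sub_comm]
    have hfin : K * (ε' ^ (θ-1) * ω 0 1) + K * (ε' ^ (θ-1) * ω 0 1) ≤ ε := by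
      have h1 : ε' ^ (θ-1) * ω 0 1 ≤ B * ω 0 1 :=
        mul_le_mul_of_nonneg_right hε'B hω01
      have h2 : K * (ε' ^ (θ-1) * ω 0 1) + K * (ε' ^ (θ-1) * ω 0 1)
          ≤ 2 * (K * ω 0 1) * B := by
        have := mul_le_mul_of_nonneg_left h1 hK0
        nlinarith
      have h3 : 2 * (K * ω 0 1) * B ≤ (2*(K * ω 0 1) + 1) * B := by
        apply mul_le_mul_of_nonneg_right _ (le_of_lt hB0)
        linarith
      have h4 : (2*(K * ω 0 1) + 1) * B = ε := by
        rw [hB]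
        field_simp
      linarith
    linarith [e1, e2, htri]
  -- the Cauchy sequence of uniform partitions
  set useq : ℕ → ℕ → ℝ := fun N i => min ((i:ℝ)/((N:ℝ)+1)) 1 with huseq
  have hNpos : ∀ N : ℕ, (0:ℝ) < (N:ℝ)+1 := fun N => by positivity
  have huseqm : ∀ N, Monotone (useq N) := by
    intro N i j hij
    have hcast : (i:ℝ) ≤ (j:ℝ) := Nat.cast_le.mpr hij
    apply min_le_min _ le_rfl
    gcongr
  have huseq0 : ∀ N, useq N 0 = 0 := by
    intro N
    simp [huseq]
  have huseqN : ∀ N, useq N (N+1) = 1 := by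
    intro N
    have h1 : (((N+1):ℕ):ℝ)/((N:ℝ)+1) = 1 := by
      rw [div_eq_one_iff_eq (ne_of_gt (hNpos N))]; push_cast; ring
    simp only [huseq, h1, min_self]
  have huseqmesh : ∀ N i, useq N (i+1) - useq N i ≤ 1/((N:ℝ)+1) := by
    intro N i
    have h1 : (((i+1):ℕ):ℝ)/((N:ℝ)+1) = (i:ℝ)/((N:ℝ)+1) + 1/((N:ℝ)+1) := by
      push_cast; ring
    have h2 : useq N (i+1) = min ((i:ℝ)/((N:ℝ)+1) + 1/((N:ℝ)+1)) 1 := by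
      simp only [huseq]; rw [h1]
    have h3 : min ((i:ℝ)/((N:ℝ)+1) + 1/((N:ℝ)+1)) 1
        ≤ min ((i:ℝ)/((N:ℝ)+1)) 1 + 1/((N:ℝ)+1) := by
      rw [← min_add_add_right]
      refine min_le_min le_rfl ?_
      have : (0:ℝ) ≤ 1/((N:ℝ)+1) := by positivity
      linarith
    have h4 : useq N i = min ((i:ℝ)/((N:ℝ)+1)) 1 := rfl
    rw [h2, h4]; linarith [h3]
  have hmeshofgt : ∀ (k : ℕ) (δ : ℝ), 0 < δ → 1/δ < ((k:ℝ)+1) →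
      ∀ i, useq k (i+1) - useq k i < δ := by
    intro k δ hδ0 hgt i
    refine lt_of_le_of_lt (huseqmesh k i) ?_
    rw [div_lt_iff₀ (hNpos k)]
    calc (1:ℝ) = δ * (1/δ) := by field_simp
      _ < δ * ((k:ℝ)+1) := mul_lt_mul_of_pos_left hgt hδ0
  set g : ℕ → ℝ := fun N => RSn y x (useq N) (N+1) with hg
  have hcauchy : CauchySeq g := by
    rw [Metric.cauchySeq_iff]
    intro ε hε
    obtain ⟨δ, hδ0, hδ⟩ := hcomp2 (ε/2) (by linarith)
    obtain ⟨N0, hN0⟩ := exists_nat_gt (1/δ)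
    refine ⟨N0, ?_⟩
    intro m hm n hn
    have hmesh : ∀ (k : ℕ), N0 ≤ k → ∀ i < k+1, useq k (i+1) - useq k i < δ := by
      intro k hk i _
      apply hmeshofgt k δ hδ0 _ i
      have h2 : (N0:ℝ) ≤ (k:ℝ) := Nat.cast_le.mpr hk
      linarith
    have hle := hδ (m+1) (useq m) (n+1) (useq n) (huseqm m) (huseq0 m) (huseqN m)
      (hmesh m hm) (huseqm n) (huseq0 n) (huseqN n) (hmesh n hn)
    rw [Real.dist_eq]
    calc |g m - g n| ≤ ε/2 := hle
      _ < ε := by linarith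
  obtain ⟨I, hI⟩ := cauchySeq_tendsto_of_complete hcauchy
  refine ⟨I, ?_⟩
  intro ε hε
  obtain ⟨δ, hδ0, hδ⟩ := hcomp2 (ε/2) (by linarith)
  refine ⟨δ, hδ0, ?_⟩
  intro n t htm ht0 htn htmesh
  obtain ⟨N1, hN1⟩ := Metric.tendsto_atTop.mp hI (ε/4) (by linarith)
  obtain ⟨N2, hN2⟩ := exists_nat_gt (1/δ)
  set N := max N1 N2 with hN
  have hdist : dist (g N) I < ε/4 := hN1 N (le_max_left _ _)
  have hmeshN : ∀ i < N+1, useq N (i+1) - useq N i < δ := by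
    intro i _
    apply hmeshofgt N δ hδ0 _ i
    have h2 : (N2:ℝ) ≤ (N:ℝ) := Nat.cast_le.mpr (le_max_right _ _)
    linarith
  have hcmp := hδ n t (N+1) (useq N) htm ht0 htn htmesh
    (huseqm N) (huseq0 N) (huseqN N) hmeshN
  have hcmp' : |RSn y x t n - g N| ≤ ε/2 := hcmp
  have htri : |RSn y x t n - I| ≤ |RSn y x t n - g N| + |g N - I| := by
    calc |RSn y x t n - I| = |(RSn y x t n - g N) + (g N - I)| := by ring_nf
      _ ≤ _ := abs_add_le _ _
  rw [Real.dist_eq] at hdist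
  calc |RSn y x t n - I| ≤ |RSn y x t n - g N| + |g N - I| := htri
    _ < ε := by linarith

end Limit

lemma finSum_eq_pS (z : ℝ → ℝ) (r : ℝ) (t : ℕ → ℝ) (n : ℕ) :
    ∑ i : Fin n, ‖z ((fun j : Fin (n+1) => t j.val) i.succ)
        - z ((fun j : Fin (n+1) => t j.val) i.castSucc)‖ ^ r = pS z r t n := by
  rw [pS, ← Fin.sum_univ_eq_sum_range (fun i => |z (t (i+1)) - z (t i)| ^ r) n]
  apply Finset.sum_congr rfl
  intro i _
  simp [Real.norm_eq_abs, Fin.val_succ, Fin.coe_castSucc]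

lemma global_bound_of_bdd {z : ℝ → ℝ} {r M : ℝ} (hr : 0 < r)
    (hM : ∀ s ∈ pathPVarSums z r, s ≤ M) :
    ∀ S ∈ WSet z r 0 1, S ≤ M ^ r := by
  rintro S ⟨n, t, ht, h0, hn, rfl⟩
  have hmem : (pS z r t n) ^ (1/r) ∈ pathPVarSums z r := by
    refine ⟨n, fun j : Fin (n+1) => t j.val, ?_, ?_, ?_, ?_⟩
    · intro a b hab
      exact ht hab
    · simpa using h0
    · simpa using hn
    · rw [finSum_eq_pS]
  have h1 : (pS z r t n) ^ (1/r) ≤ M := hM _ hmem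
  have h2 : ((pS z r t n) ^ (1/r)) ^ r = pS z r t n := by
    rw [one_div]
    exact Real.rpow_inv_rpow (pS_nonneg z r t n) (ne_of_gt hr)
  calc pS z r t n = ((pS z r t n) ^ (1/r)) ^ r := h2.symm
    _ ≤ M ^ r := Real.rpow_le_rpow (Real.rpow_nonneg (pS_nonneg z r t n) _) h1 (le_of_lt hr)

lemma pathPVarSums_nonempty_nonneg {z : ℝ → ℝ} {r M : ℝ}
    (hM : ∀ s ∈ pathPVarSums z r, s ≤ M) : 0 ≤ M := by
  have hmem : (∑ i : Fin 1, ‖z ((fun j : Fin 2 => ((j:ℕ):ℝ)) i.succ)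
      - z ((fun j : Fin 2 => ((j:ℕ):ℝ)) i.castSucc)‖ ^ r) ^ (1/r) ∈ pathPVarSums z r := by
    refine ⟨1, fun j : Fin 2 => ((j:ℕ):ℝ), ?_, by simp, by simp [Fin.last], rfl⟩
    intro a b hab
    exact_mod_cast Nat.cast_le.mpr hab
  refine le_trans ?_ (hM _ hmem)
  apply Real.rpow_nonneg
  apply Finset.sum_nonneg
  intro i _
  exact Real.rpow_nonneg (norm_nonneg _) _

lemma sum_range_two_mul (f : ℕ → ℝ) (m : ℕ) :
    ∑ j ∈ Finset.range (2*m), f j = ∑ i ∈ Finset.range m, (f (2*i) + f (2*i+1)) := by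
  induction m with
  | zero => simp
  | succ m ih =>
    have h : 2*(m+1) = (2*m+1)+1 := by ring
    rw [h, Finset.sum_range_succ, Finset.sum_range_succ, ih, Finset.sum_range_succ]
    ring

end YoungAux

set_option maxHeartbeats 2000000 in
open YoungAux in
/-- Young's integral: if `x` is a continuous path of finite `p`-variation and `y` a continuous
path of finite `q`-variation with `1/p + 1/q > 1`, then the left-endpoint Riemann–Stieltjes sums
converge to a common limit `I` as the mesh tends to `0`; moreover, if `x` additionally has
finite `1`-variation, then `I` is the Riemann–Stieltjes integral `∫₀¹ y dx`, i.e. the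
Riemann–Stieltjes sums with arbitrary tags also converge to `I`. -/
theorem young_integral_exists (x y : ℝ → ℝ) (p q : ℝ)
    (hp : 1 ≤ p) (hq : 1 ≤ q) (hpq : 1 / p + 1 / q > 1)
    (hx : Continuous x) (hy : Continuous y)
    (hxp : BddAbove (pathPVarSums x p)) (hyq : BddAbove (pathPVarSums y q)) :
    ∃ I : ℝ,
      (∀ ε > (0 : ℝ), ∃ δ > (0 : ℝ), ∀ (n : ℕ) (t : Fin (n + 1) → ℝ),
        Monotone t → t 0 = 0 → t (Fin.last n) = 1 →
        (∀ i : Fin n, t i.succ - t i.castSucc < δ) →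
        |(∑ i : Fin n, y (t i.castSucc) * (x (t i.succ) - x (t i.castSucc))) - I| < ε) ∧
      (BddAbove (pathPVarSums x 1) →
        ∀ ε > (0 : ℝ), ∃ δ > (0 : ℝ), ∀ (n : ℕ) (t : Fin (n + 1) → ℝ) (ξ : Fin n → ℝ),
          Monotone t → t 0 = 0 → t (Fin.last n) = 1 →
          (∀ i : Fin n, t i.succ - t i.castSucc < δ) →
          (∀ i : Fin n, ξ i ∈ Set.Icc (t i.castSucc) (t i.succ)) →
          |(∑ i : Fin n, y (ξ i) * (x (t i.succ) - x (t i.castSucc))) - I| < ε) := by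
  classical
  have hp0 : (0:ℝ) < p := by linarith
  have hq0 : (0:ℝ) < q := by linarith
  obtain ⟨Mx, hMx⟩ := hxp
  obtain ⟨My, hMy⟩ := hyq
  replace hMx : ∀ s ∈ pathPVarSums x p, s ≤ Mx := fun s hs => hMx hs
  replace hMy : ∀ s ∈ pathPVarSums y q, s ≤ My := fun s hs => hMy hs
  have hMx0 : 0 ≤ Mx := pathPVarSums_nonempty_nonneg hMx
  have hMy0 : 0 ≤ My := pathPVarSums_nonempty_nonneg hMy
  have hCx : ∀ S ∈ WSet x p 0 1, S ≤ Mx ^ p := global_bound_of_bdd hp0 hMx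
  have hCy : ∀ S ∈ WSet y q 0 1, S ≤ My ^ q := global_bound_of_bdd hq0 hMy
  have hMxp0 : 0 ≤ Mx ^ p := Real.rpow_nonneg hMx0 _
  have hMyq0 : 0 ≤ My ^ q := Real.rpow_nonneg hMy0 _
  -- increment bounds
  have hIncx : ∀ u v : ℝ, 0 ≤ u → u ≤ v → v ≤ 1 → |x v - x u| ≤ Mx := by
    intro u v h1 h2 h3
    have hm : |x v - x u| ^ p ≤ Mx ^ p := WSet_le_of_global hCx h1 h3 (mem_WSet_self h2)
    by_contra hcon
    push_neg at hcon
    have := Real.rpow_lt_rpow hMx0 hcon hp0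
    linarith
  have hIncy : ∀ u v : ℝ, 0 ≤ u → u ≤ v → v ≤ 1 → |y v - y u| ≤ My := by
    intro u v h1 h2 h3
    have hm : |y v - y u| ^ q ≤ My ^ q := WSet_le_of_global hCy h1 h3 (mem_WSet_self h2)
    by_contra hcon
    push_neg at hcon
    have := Real.rpow_lt_rpow hMy0 hcon hq0
    linarith
  -- constants
  set c : ℝ := (1 + (1/p + 1/q))/2 with hc
  have hc1 : 1 < c := by rw [hc]; linarith
  have hc0 : 0 < c := by linarith
  have hcs : c < 1/p + 1/q := by rw [hc]; linarith
  set p' : ℝ := p * c with hp'def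
  set q' : ℝ := q * c with hq'def
  have hp'0 : 0 < p' := by rw [hp'def]; positivity
  have hq'0 : 0 < q' := by rw [hq'def]; positivity
  set α : ℝ := 1/p' with hα
  set β : ℝ := 1/q' with hβ
  set θ : ℝ := α + β with hθdef
  have hαβ : α + β = θ := hθdef.symm
  have hα0 : 0 < α := by rw [hα]; positivity
  have hβ0 : 0 < β := by rw [hβ]; positivity
  have hθeq : θ = (1/p + 1/q)/c := by
    rw [hθdef, hα, hβ, hp'def, hq'def]
    field_simp [ne_of_gt hp0, ne_of_gt hq0, ne_of_gt hc0]
  have hθ1 : 1 < θ := by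
    rw [hθeq]
    exact (one_lt_div hc0).mpr hcs
  have hpp' : p ≤ p' := by nlinarith
  have hqq' : q ≤ q' := by nlinarith
  have hex : 0 < p' - p := by nlinarith
  have hey : 0 < q' - q := by nlinarith
  -- global bounds for the bigger exponents
  set Mx' : ℝ := max Mx 1 with hMx'
  set My' : ℝ := max My 1 with hMy'
  have hMx'0 : 0 ≤ Mx' := le_trans zero_le_one (le_max_right _ _)
  have hMy'0 : 0 ≤ My' := le_trans zero_le_one (le_max_right _ _)
  set Cx' : ℝ := Mx' ^ (p'-p) * Mx ^ p with hCx'def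
  set Cy' : ℝ := My' ^ (q'-q) * My ^ q with hCy'def
  have hCx' : ∀ S ∈ WSet x p' 0 1, S ≤ Cx' := by
    rintro S ⟨n, t, ht, h0, hn, rfl⟩
    have h1 : pS x p' t n ≤ Mx' ^ (p'-p) * pS x p t n := by
      apply pS_interp hp0 hpp' hMx'0
      intro i hi
      exact le_trans (hIncx _ _ (h0 ▸ ht (Nat.zero_le i)) (ht (Nat.le_succ i))
        (hn ▸ ht (by omega))) (le_max_left _ _)
    refine le_trans h1 ?_
    rw [hCx'def]
    exact mul_le_mul_of_nonneg_left (hCx _ ⟨n, t, ht, h0, hn, rfl⟩)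
      (Real.rpow_nonneg hMx'0 _)
  have hCy' : ∀ S ∈ WSet y q' 0 1, S ≤ Cy' := by
    rintro S ⟨n, t, ht, h0, hn, rfl⟩
    have h1 : pS y q' t n ≤ My' ^ (q'-q) * pS y q t n := by
      apply pS_interp hq0 hqq' hMy'0
      intro i hi
      exact le_trans (hIncy _ _ (h0 ▸ ht (Nat.zero_le i)) (ht (Nat.le_succ i))
        (hn ▸ ht (by omega))) (le_max_left _ _)
    refine le_trans h1 ?_
    rw [hCy'def]
    exact mul_le_mul_of_nonneg_left (hCy _ ⟨n, t, ht, h0, hn, rfl⟩)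
      (Real.rpow_nonneg hMy'0 _)
  -- the control ω
  set ω : ℝ → ℝ → ℝ := fun a b => W x p' a b + W y q' a b with hωdef
  have hω0 : ∀ {a b : ℝ}, 0 ≤ a → a ≤ b → b ≤ 1 → 0 ≤ ω a b := by
    intro a b h1 h2 h3
    exact add_nonneg (W_nonneg hCx' h1 h2 h3) (W_nonneg hCy' h1 h2 h3)
  have hωs : ∀ {a c' b : ℝ}, 0 ≤ a → a ≤ c' → c' ≤ b → b ≤ 1 →
      ω a c' + ω c' b ≤ ω a b := by
    intro a c' b h1 h2 h3 h4
    have e1 := W_superadd hCx' h1 h2 h3 h4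
    have e2 := W_superadd hCy' h1 h2 h3 h4
    simp only [hωdef]
    linarith
  have hωm : ∀ {a a' b' b : ℝ}, 0 ≤ a → a ≤ a' → a' ≤ b' → b' ≤ b → b ≤ 1 →
      ω a' b' ≤ ω a b := by
    intro a a' b' b h1 h2 h3 h4 h5
    have e1 := W_mono hCx' h1 h2 h3 h4 h5
    have e2 := W_mono hCy' h1 h2 h3 h4 h5
    simp only [hωdef]
    linarith
  have hωx : ∀ {u v : ℝ}, 0 ≤ u → u ≤ v → v ≤ 1 → |x v - x u| ≤ ω u v ^ α := by
    intro u v h1 h2 h3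
    have hW : |x v - x u| ^ p' ≤ ω u v := by
      have e1 := le_W hCx' h1 h2 h3
      have e2 := W_nonneg hCy' h1 h2 h3
      simp only [hωdef]
      linarith
    have habs0 : (0:ℝ) ≤ |x v - x u| := abs_nonneg _
    have h4 : (|x v - x u| ^ p') ^ α ≤ (ω u v) ^ α :=
      Real.rpow_le_rpow (Real.rpow_nonneg habs0 _) hW (le_of_lt hα0)
    rw [hα, one_div]
    calc |x v - x u| = (|x v - x u| ^ p') ^ p'⁻¹ :=
          (Real.rpow_rpow_inv habs0 (ne_of_gt hp'0)).symm
      _ ≤ (ω u v) ^ p'⁻¹ := by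
          rw [hα, one_div] at h4
          exact h4
  have hωy : ∀ {u v : ℝ}, 0 ≤ u → u ≤ v → v ≤ 1 → |y v - y u| ≤ ω u v ^ β := by
    intro u v h1 h2 h3
    have hW : |y v - y u| ^ q' ≤ ω u v := by
      have e1 := le_W hCy' h1 h2 h3
      have e2 := W_nonneg hCx' h1 h2 h3
      simp only [hωdef]
      linarith
    have habs0 : (0:ℝ) ≤ |y v - y u| := abs_nonneg _
    have h4 : (|y v - y u| ^ q') ^ β ≤ (ω u v) ^ β :=
      Real.rpow_le_rpow (Real.rpow_nonneg habs0 _) hW (le_of_lt hβ0)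
    rw [hβ, one_div]
    calc |y v - y u| = (|y v - y u| ^ q') ^ q'⁻¹ :=
          (Real.rpow_rpow_inv habs0 (ne_of_gt hq'0)).symm
      _ ≤ (ω u v) ^ q'⁻¹ := by
          rw [hβ, one_div] at h4
          exact h4
  -- ω is small on small intervals
  have hsmall : ∀ ε > (0:ℝ), ∃ δ > (0:ℝ), ∀ a b : ℝ,
      0 ≤ a → a ≤ b → b ≤ 1 → b - a < δ → ω a b ≤ ε := by
    intro ε hε
    have hucx : UniformContinuousOn x (Set.Icc 0 1) :=
      isCompact_Icc.uniformContinuousOn_of_continuous hx.continuousOn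
    have hucy : UniformContinuousOn y (Set.Icc 0 1) :=
      isCompact_Icc.uniformContinuousOn_of_continuous hy.continuousOn
    rw [Metric.uniformContinuousOn_iff] at hucx hucy
    set Bx : ℝ := (ε/2) / (Mx ^ p + 1) with hBx
    set By : ℝ := (ε/2) / (My ^ q + 1) with hBy
    have hBx0 : 0 < Bx := div_pos (by linarith) (by linarith)
    have hBy0 : 0 < By := div_pos (by linarith) (by linarith)
    set ηx : ℝ := min 1 (Bx ^ (1/(p'-p))) with hηx
    set ηy : ℝ := min 1 (By ^ (1/(q'-q))) with hηy
    have hηx0 : 0 < ηx := lt_min one_pos (Real.rpow_pos_of_pos hBx0 _)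
    have hηy0 : 0 < ηy := lt_min one_pos (Real.rpow_pos_of_pos hBy0 _)
    obtain ⟨δx, hδx0, hδx⟩ := hucx ηx hηx0
    obtain ⟨δy, hδy0, hδy⟩ := hucy ηy hηy0
    refine ⟨min δx δy, lt_min hδx0 hδy0, ?_⟩
    intro a b h1 h2 h3 h4
    have hWx : W x p' a b ≤ ηx ^ (p'-p) * (Mx ^ p) := by
      apply W_interp_le hCx hp0 hpp' (le_of_lt hηx0) h1 h2 h3
      intro u v hu huv hv
      have hu' : u ∈ Set.Icc (0:ℝ) 1 := ⟨le_trans h1 hu, le_trans (le_trans huv hv) h3⟩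
      have hv' : v ∈ Set.Icc (0:ℝ) 1 := ⟨le_trans h1 (le_trans hu huv), le_trans hv h3⟩
      have hd : dist v u < δx := by
        rw [Real.dist_eq, abs_of_nonneg (by linarith)]
        have : v - u ≤ b - a := by linarith
        calc v - u ≤ b - a := this
          _ < min δx δy := h4
          _ ≤ δx := min_le_left _ _
      have := hδx v hv' u hu' hd
      rw [Real.dist_eq] at this
      exact le_of_lt this
    have hWy : W y q' a b ≤ ηy ^ (q'-q) * (My ^ q) := by
      apply W_interp_le hCy hq0 hqq' (le_of_lt hηy0) h1 h2 h3
      intro u v hu huv hv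
      have hu' : u ∈ Set.Icc (0:ℝ) 1 := ⟨le_trans h1 hu, le_trans (le_trans huv hv) h3⟩
      have hv' : v ∈ Set.Icc (0:ℝ) 1 := ⟨le_trans h1 (le_trans hu huv), le_trans hv h3⟩
      have hd : dist v u < δy := by
        rw [Real.dist_eq, abs_of_nonneg (by linarith)]
        have : v - u ≤ b - a := by linarith
        calc v - u ≤ b - a := this
          _ < min δx δy := h4
          _ ≤ δy := min_le_right _ _
      have := hδy v hv' u hu' hd
      rw [Real.dist_eq] at this
      exact le_of_lt this
    have hηxB : ηx ^ (p'-p) ≤ Bx := by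
      have h5 : ηx ≤ Bx ^ (1/(p'-p)) := min_le_right _ _
      have h6 : (Bx ^ (1/(p'-p))) ^ (p'-p) = Bx := by
        rw [one_div]
        exact Real.rpow_inv_rpow (le_of_lt hBx0) (ne_of_gt hex)
      calc ηx ^ (p'-p) ≤ (Bx ^ (1/(p'-p))) ^ (p'-p) :=
            Real.rpow_le_rpow (le_of_lt hηx0) h5 (le_of_lt hex)
        _ = Bx := h6
    have hηyB : ηy ^ (q'-q) ≤ By := by
      have h5 : ηy ≤ By ^ (1/(q'-q)) := min_le_right _ _
      have h6 : (By ^ (1/(q'-q))) ^ (q'-q) = By := by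
        rw [one_div]
        exact Real.rpow_inv_rpow (le_of_lt hBy0) (ne_of_gt hey)
      calc ηy ^ (q'-q) ≤ (By ^ (1/(q'-q))) ^ (q'-q) :=
            Real.rpow_le_rpow (le_of_lt hηy0) h5 (le_of_lt hey)
        _ = By := h6
    have hx2 : ηx ^ (p'-p) * (Mx ^ p) ≤ ε/2 := by
      have h7 : ηx ^ (p'-p) * (Mx ^ p) ≤ Bx * (Mx ^ p) :=
        mul_le_mul_of_nonneg_right hηxB hMxp0
      have h8 : Bx * (Mx ^ p) ≤ Bx * (Mx ^ p + 1) :=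
        mul_le_mul_of_nonneg_left (by linarith) (le_of_lt hBx0)
      have h9 : Bx * (Mx ^ p + 1) = ε/2 := by
        rw [hBx]
        exact div_mul_cancel₀ _ (by linarith)
      linarith
    have hy2 : ηy ^ (q'-q) * (My ^ q) ≤ ε/2 := by
      have h7 : ηy ^ (q'-q) * (My ^ q) ≤ By * (My ^ q) :=
        mul_le_mul_of_nonneg_right hηyB hMyq0
      have h8 : By * (My ^ q) ≤ By * (My ^ q + 1) :=
        mul_le_mul_of_nonneg_left (by linarith) (le_of_lt hBy0)
      have h9 : By * (My ^ q + 1) = ε/2 := by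
        rw [hBy]
        exact div_mul_cancel₀ _ (by linarith)
      linarith
    simp only [hωdef]
    linarith
  -- the limit
  obtain ⟨I, hI⟩ := exists_limit (x := x) (y := y) hθ1 hα0 hβ0 hαβ
    (fun h1 h2 h3 => hω0 h1 h2 h3) (fun h1 h2 h3 h4 => hωs h1 h2 h3 h4)
    (fun h1 h2 h3 => hωx h1 h2 h3) (fun h1 h2 h3 => hωy h1 h2 h3) hsmall
  refine ⟨I, ?_, ?_⟩
  · -- left-endpoint Riemann sums
    intro ε hε
    obtain ⟨δ, hδ0, hδ⟩ := hI ε hε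
    refine ⟨δ, hδ0, ?_⟩
    intro n t htm ht0 htl hmesh
    rcases Nat.eq_zero_or_pos n with rfl | hn0
    · exfalso
      have h01 : t 0 = 1 := htl
      rw [ht0] at h01
      norm_num at h01
    set tN : ℕ → ℝ := fun i => t ⟨min i n, by omega⟩ with htN
    have htNm : Monotone tN := by
      intro i j hij
      exact htm (Fin.mk_le_mk.mpr (min_le_min hij le_rfl))
    have htN0 : tN 0 = 0 := by
      have he : (⟨min 0 n, by omega⟩ : Fin (n+1)) = 0 := by
        apply Fin.ext; simp
      simp only [htN]
      rw [he, ht0]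
    have htNn : tN n = 1 := by
      have he : (⟨min n n, by omega⟩ : Fin (n+1)) = Fin.last n := by
        apply Fin.ext; simp [Fin.last]
      simp only [htN]
      rw [he, htl]
    have hcs : ∀ (i : ℕ) (hi : i < n), tN i = t ((⟨i, hi⟩ : Fin n).castSucc)
        ∧ tN (i+1) = t ((⟨i, hi⟩ : Fin n).succ) := by
      intro i hi
      constructor
      · have he : (⟨min i n, by omega⟩ : Fin (n+1)) = (⟨i, hi⟩ : Fin n).castSucc := by
          apply Fin.ext; simp [Nat.min_eq_left (le_of_lt hi)]
        simp only [htN]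
        rw [he]
      · have he : (⟨min (i+1) n, by omega⟩ : Fin (n+1)) = (⟨i, hi⟩ : Fin n).succ := by
          apply Fin.ext; simp [Nat.min_eq_left (Nat.succ_le_of_lt hi)]
        simp only [htN]
        rw [he]
    have hsum : RSn y x tN n
        = ∑ i : Fin n, y (t i.castSucc) * (x (t i.succ) - x (t i.castSucc)) := by
      rw [RSn, ← Fin.sum_univ_eq_sum_range (fun i => y (tN i) * (x (tN (i+1)) - x (tN i))) n]
      apply Finset.sum_congr rfl
      intro i _
      rw [(hcs (i:ℕ) i.isLt).1, (hcs (i:ℕ) i.isLt).2, Fin.eta]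
    have hmeshN : ∀ i < n, tN (i+1) - tN i < δ := by
      intro i hi
      rw [(hcs i hi).1, (hcs i hi).2]
      exact hmesh ⟨i, hi⟩
    have := hδ n tN htNm htN0 htNn hmeshN
    rwa [hsum] at this
  · -- tagged Riemann sums
    intro _ ε hε
    obtain ⟨δ1, hδ10, hδ1⟩ := hI (ε/2) (by linarith)
    have hω01 : 0 ≤ ω 0 1 := hω0 le_rfl zero_le_one le_rfl
    set B2 : ℝ := (ε/2) / (ω 0 1 + 1) with hB2
    have hB20 : 0 < B2 := div_pos (by linarith) (by linarith)
    set ε2 : ℝ := min 1 (B2 ^ (1/(θ-1))) with hε2def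
    have hε20 : 0 < ε2 := lt_min one_pos (Real.rpow_pos_of_pos hB20 _)
    have hε2B : ε2 ^ (θ-1) ≤ B2 := by
      have h5 : ε2 ≤ B2 ^ (1/(θ-1)) := min_le_right _ _
      have h6 : (B2 ^ (1/(θ-1))) ^ (θ-1) = B2 := by
        rw [one_div]; exact Real.rpow_inv_rpow (le_of_lt hB20) (by linarith)
      calc ε2 ^ (θ-1) ≤ (B2 ^ (1/(θ-1))) ^ (θ-1) :=
            Real.rpow_le_rpow (le_of_lt hε20) h5 (by linarith)
        _ = B2 := h6
    obtain ⟨δ2, hδ20, hδ2⟩ := hsmall ε2 hε20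
    refine ⟨min δ1 δ2, lt_min hδ10 hδ20, ?_⟩
    intro n t ξ htm ht0 htl hmesh hξ
    rcases Nat.eq_zero_or_pos n with rfl | hn0
    · exfalso
      have h01 : t 0 = 1 := htl
      rw [ht0] at h01
      norm_num at h01
    set tN : ℕ → ℝ := fun i => t ⟨min i n, by omega⟩ with htN
    have htNm : Monotone tN := by
      intro i j hij
      exact htm (Fin.mk_le_mk.mpr (min_le_min hij le_rfl))
    have htN0 : tN 0 = 0 := by
      have he : (⟨min 0 n, by omega⟩ : Fin (n+1)) = 0 := by
        apply Fin.ext; simp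
      simp only [htN]
      rw [he, ht0]
    have htNn : tN n = 1 := by
      have he : (⟨min n n, by omega⟩ : Fin (n+1)) = Fin.last n := by
        apply Fin.ext; simp [Fin.last]
      simp only [htN]
      rw [he, htl]
    have hcs : ∀ (i : ℕ) (hi : i < n), tN i = t ((⟨i, hi⟩ : Fin n).castSucc)
        ∧ tN (i+1) = t ((⟨i, hi⟩ : Fin n).succ) := by
      intro i hi
      constructor
      · have he : (⟨min i n, by omega⟩ : Fin (n+1)) = (⟨i, hi⟩ : Fin n).castSucc := by
          apply Fin.ext; simp [Nat.min_eq_left (le_of_lt hi)]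
        simp only [htN]
        rw [he]
      · have he : (⟨min (i+1) n, by omega⟩ : Fin (n+1)) = (⟨i, hi⟩ : Fin n).succ := by
          apply Fin.ext; simp [Nat.min_eq_left (Nat.succ_le_of_lt hi)]
        simp only [htN]
        rw [he]
    set ξN : ℕ → ℝ := fun i => if h : i < n then ξ ⟨i, h⟩ else 1 with hξN
    have hξNeq : ∀ (i : ℕ) (hi : i < n), ξN i = ξ ⟨i, hi⟩ := by
      intro i hi
      simp only [hξN, dif_pos hi]
    -- the doubled partition
    set v : ℕ → ℝ := fun j => if j/2 < n then (if j % 2 = 0 then tN (j/2) else ξN (j/2)) else 1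
      with hv
    have hveven : ∀ i < n, v (2*i) = tN i := by
      intro i hi
      have h1 : (2*i)/2 = i := by omega
      have h2 : (2*i) % 2 = 0 := by omega
      simp only [hv, h1, h2]
      simp [hi]
    have hvodd : ∀ i < n, v (2*i+1) = ξN i := by
      intro i hi
      have h1 : (2*i+1)/2 = i := by omega
      have h2 : (2*i+1) % 2 = 1 := by omega
      simp only [hv, h1, h2]
      simp [hi]
    have hvend : ∀ j, 2*n ≤ j → v j = 1 := by
      intro j hj
      have h1 : ¬ (j/2 < n) := by omega
      simp only [hv, if_neg h1]
    have hξmem : ∀ (i : ℕ) (hi : i < n), tN i ≤ ξN i ∧ ξN i ≤ tN (i+1) := by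
      intro i hi
      rw [hξNeq i hi, (hcs i hi).1, (hcs i hi).2]
      exact ⟨(hξ ⟨i, hi⟩).1, (hξ ⟨i, hi⟩).2⟩
    have hv2succ : ∀ i < n, v (2*i+1+1) = tN (i+1) := by
      intro i hi
      have h22 : 2*i+1+1 = 2*(i+1) := by ring
      rw [h22]
      by_cases hi1 : i+1 < n
      · exact hveven _ hi1
      · rw [hvend _ (by omega)]
        have hieq : i + 1 = n := by omega
        rw [hieq, htNn]
    have hvmono : Monotone v := by
      apply monotone_nat_of_le_succ
      intro j
      by_cases hj : j / 2 < n
      · by_cases hp2 : j % 2 = 0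
        · obtain ⟨i, rfl⟩ : ∃ i, j = 2*i := ⟨j/2, by omega⟩
          have hj' : i < n := by omega
          rw [hveven _ hj', hvodd _ hj']
          exact (hξmem _ hj').1
        · obtain ⟨i, rfl⟩ : ∃ i, j = 2*i+1 := ⟨j/2, by omega⟩
          have hj' : i < n := by omega
          rw [hvodd _ hj', hv2succ _ hj']
          exact (hξmem _ hj').2
      · rw [hvend j (by omega), hvend (j+1) (by omega)]
    have hv0 : v 0 = 0 := by
      have h := hveven 0 hn0
      norm_num at h
      rw [h, htN0]
    have hv2n : v (2*n) = 1 := hvend _ le_rfl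
    have htNmesh : ∀ i < n, tN (i+1) - tN i < min δ1 δ2 := by
      intro i hi
      rw [(hcs i hi).1, (hcs i hi).2]
      exact hmesh ⟨i, hi⟩
    have hvmesh : ∀ j < 2*n, v (j+1) - v j < δ1 := by
      intro j hjlt
      by_cases hp2 : j % 2 = 0
      · obtain ⟨i, rfl⟩ : ∃ i, j = 2*i := ⟨j/2, by omega⟩
        have hj' : i < n := by omega
        have hm := htNmesh i hj'
        have h1 := (hξmem i hj').1
        have h2 := (hξmem i hj').2
        rw [hveven _ hj', hvodd _ hj']
        have hminle : min δ1 δ2 ≤ δ1 := min_le_left _ _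
        linarith
      · obtain ⟨i, rfl⟩ : ∃ i, j = 2*i+1 := ⟨j/2, by omega⟩
        have hj' : i < n := by omega
        have hm := htNmesh i hj'
        have h1 := (hξmem i hj').1
        have h2 := (hξmem i hj').2
        rw [hvodd _ hj', hv2succ _ hj']
        have hminle : min δ1 δ2 ≤ δ1 := min_le_left _ _
        linarith
    -- rewriting the sums
    have hRSv : RSn y x v (2*n) = ∑ i ∈ Finset.range n,
        ((y (tN i) * (x (ξN i) - x (tN i))) + (y (ξN i) * (x (tN (i+1)) - x (ξN i)))) := by
      rw [RSn, sum_range_two_mul (fun j => y (v j) * (x (v (j+1)) - x (v j))) n]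
      apply Finset.sum_congr rfl
      intro i hi
      simp only [Finset.mem_range] at hi
      beta_reduce
      rw [hveven _ hi, hvodd _ hi, hv2succ _ hi]
    have htagged : (∑ i : Fin n, y (ξ i) * (x (t i.succ) - x (t i.castSucc)))
        = ∑ i ∈ Finset.range n, y (ξN i) * (x (tN (i+1)) - x (tN i)) := by
      rw [← Fin.sum_univ_eq_sum_range (fun i => y (ξN i) * (x (tN (i+1)) - x (tN i))) n]
      apply Finset.sum_congr rfl
      intro i _
      rw [hξNeq (i:ℕ) i.isLt, (hcs (i:ℕ) i.isLt).1, (hcs (i:ℕ) i.isLt).2, Fin.eta]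
    -- the correction estimate
    have hcorr : |(∑ i : Fin n, y (ξ i) * (x (t i.succ) - x (t i.castSucc)))
        - RSn y x v (2*n)| ≤ ε/2 := by
      rw [htagged, hRSv, ← Finset.sum_sub_distrib]
      refine le_trans (Finset.abs_sum_le_sum_abs _ _) ?_
      have hpt : ∀ i ∈ Finset.range n,
          |y (ξN i) * (x (tN (i+1)) - x (tN i))
            - ((y (tN i) * (x (ξN i) - x (tN i))) + (y (ξN i) * (x (tN (i+1)) - x (ξN i))))|
          ≤ ε2 ^ (θ-1) * ω (tN i) (tN (i+1)) := by
        intro i hi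
        simp only [Finset.mem_range] at hi
        have hprod : y (ξN i) * (x (tN (i+1)) - x (tN i))
            - ((y (tN i) * (x (ξN i) - x (tN i))) + (y (ξN i) * (x (tN (i+1)) - x (ξN i))))
            = (y (ξN i) - y (tN i)) * (x (ξN i) - x (tN i)) := by ring
        rw [hprod, abs_mul]
        have hb1 : 0 ≤ tN i := htN0 ▸ htNm (Nat.zero_le i)
        have hb2 : tN i ≤ ξN i := (hξmem i hi).1
        have hb3 : ξN i ≤ tN (i+1) := (hξmem i hi).2
        have hb4 : tN (i+1) ≤ 1 := htNn ▸ htNm (by omega : i+1 ≤ n)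
        have hξ1 : ξN i ≤ 1 := le_trans hb3 hb4
        have hωi0 : 0 ≤ ω (tN i) (tN (i+1)) := hω0 hb1 (le_trans hb2 hb3) hb4
        have hmono : ω (tN i) (ξN i) ≤ ω (tN i) (tN (i+1)) :=
          hωm hb1 le_rfl hb2 hb3 hb4
        have hDy : |y (ξN i) - y (tN i)| ≤ ω (tN i) (tN (i+1)) ^ β := by
          refine le_trans (hωy hb1 hb2 hξ1) ?_
          exact Real.rpow_le_rpow (hω0 hb1 hb2 hξ1) hmono (le_of_lt hβ0)
        have hDx : |x (ξN i) - x (tN i)| ≤ ω (tN i) (tN (i+1)) ^ α := by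
          refine le_trans (hωx hb1 hb2 hξ1) ?_
          exact Real.rpow_le_rpow (hω0 hb1 hb2 hξ1) hmono (le_of_lt hα0)
        have hprod2 : |y (ξN i) - y (tN i)| * |x (ξN i) - x (tN i)|
            ≤ ω (tN i) (tN (i+1)) ^ θ := by
          have h3 : |y (ξN i) - y (tN i)| * |x (ξN i) - x (tN i)|
              ≤ ω (tN i) (tN (i+1)) ^ β * ω (tN i) (tN (i+1)) ^ α :=
            mul_le_mul hDy hDx (abs_nonneg _) (Real.rpow_nonneg hωi0 _)
          refine le_trans h3 ?_
          rw [← Real.rpow_add' hωi0 (by rw [add_comm] at hαβ; rw [hαβ]; positivity)]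
          rw [add_comm] at hαβ
          rw [hαβ]
        refine le_trans hprod2 ?_
        have hωiε : ω (tN i) (tN (i+1)) ≤ ε2 := by
          apply hδ2 _ _ hb1 (le_trans hb2 hb3) hb4
          have := htNmesh i hi
          have h9 : min δ1 δ2 ≤ δ2 := min_le_right _ _
          linarith
        have he : θ - 1 + 1 = θ := by ring
        calc ω (tN i) (tN (i+1)) ^ θ
            = ω (tN i) (tN (i+1)) ^ (θ-1) * ω (tN i) (tN (i+1)) ^ (1:ℝ) := by
              rw [← Real.rpow_add' hωi0 (by rw [he]; positivity)]
              rw [he]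
          _ = ω (tN i) (tN (i+1)) ^ (θ-1) * ω (tN i) (tN (i+1)) := by rw [Real.rpow_one]
          _ ≤ ε2 ^ (θ-1) * ω (tN i) (tN (i+1)) := by
              apply mul_le_mul_of_nonneg_right _ hωi0
              exact Real.rpow_le_rpow hωi0 hωiε (by linarith)
      refine le_trans (Finset.sum_le_sum hpt) ?_
      rw [← Finset.mul_sum]
      have hchain : ∑ i ∈ Finset.range n, ω (tN i) (tN (i+1)) ≤ ω 0 1 := by
        have := omega_chain (fun h1 h2 h3 => hω0 h1 h2 h3)
          (fun h1 h2 h3 h4 => hωs h1 h2 h3 h4) htNm (le_of_eq htN0.symm) (le_of_eq htNn)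
        rwa [htN0, htNn] at this
      have h10 : ε2 ^ (θ-1) * (∑ i ∈ Finset.range n, ω (tN i) (tN (i+1)))
          ≤ ε2 ^ (θ-1) * ω 0 1 :=
        mul_le_mul_of_nonneg_left hchain (Real.rpow_nonneg (le_of_lt hε20) _)
      have h11 : ε2 ^ (θ-1) * ω 0 1 ≤ B2 * ω 0 1 := mul_le_mul_of_nonneg_right hε2B hω01
      have h12 : B2 * ω 0 1 ≤ B2 * (ω 0 1 + 1) :=
        mul_le_mul_of_nonneg_left (by linarith) (le_of_lt hB20)
      have h13 : B2 * (ω 0 1 + 1) = ε/2 := by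
        rw [hB2]
        exact div_mul_cancel₀ _ (by linarith)
      exact h10.trans (h11.trans (h12.trans_eq h13))
    have hv1 := hδ1 (2*n) v hvmono hv0 hv2n hvmesh
    calc |(∑ i : Fin n, y (ξ i) * (x (t i.succ) - x (t i.castSucc))) - I|
        = |((∑ i : Fin n, y (ξ i) * (x (t i.succ) - x (t i.castSucc)))
            - RSn y x v (2*n)) + (RSn y x v (2*n) - I)| := by congr 1; ring
      _ ≤ |(∑ i : Fin n, y (ξ i) * (x (t i.succ) - x (t i.castSucc)))
            - RSn y x v (2*n)| + |RSn y x v (2*n) - I| := abs_add_le _ _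
      _ < ε := by linarith
end

section
/- Define the Schilder rate function I on the space C_0(ℝ^d) of continuous paths starting at 0 by I(w) = (1/2)‖w‖²_H if w lies in Cameron–Martin space H (absolutely continuous with square-integrable derivative) and I(w) = ∞ otherwise, where ‖w‖²_H = ∫_0^1 |w'_t|² dt. Then I is a good rate function: for each c ≥ 0 the sublevel set {w : I(w) ≤ c} is compact in the uniform topology. -/
open MeasureTheory

/-- `h'` is a square-integrable derivative of the continuous path `w` on `[0,1]`:
`w_t = ∫₀ᵗ h'_s ds` with `h' ∈ L²([0,1], ℝ^d)`. So `w` lies in Cameron–Martin space. -/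
def IsCMDeriv (d : ℕ) (w : C(Set.Icc (0:ℝ) 1, EuclideanSpace ℝ (Fin d)))
    (h' : ℝ → EuclideanSpace ℝ (Fin d)) : Prop :=
  MemLp h' 2 (volume.restrict (Set.Icc (0:ℝ) 1)) ∧
  ∀ t : Set.Icc (0:ℝ) 1, w t = ∫ s in (0:ℝ)..(t:ℝ), h' s

/-- The Schilder rate function: `I(w) = (1/2)‖w‖_H² = (1/2)∫₀¹ |w'|²` if `w` is a
Cameron–Martin path, and `I(w) = ∞` otherwise (`sInf ∅ = ∞` in `ℝ≥0∞`). -/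
noncomputable def schilderRate (d : ℕ)
    (w : C(Set.Icc (0:ℝ) 1, EuclideanSpace ℝ (Fin d))) : ENNReal :=
  sInf {e | ∃ h', IsCMDeriv d w h' ∧
    e = ENNReal.ofReal ((1/2) * ∫ t in (0:ℝ)..1, ‖h' t‖ ^ 2)}

/-!
Let `Ψ f (t) = ∫₀ᵗ f` for `f ∈ L²([0,1], ℝᵈ)`. A path has finite rate exactly when it is `Ψ f`,
and then `f` is determined a.e. by Lebesgue differentiation, so `{I ≤ c}` is the image under `Ψ`
of the closed ball of radius `√(2c)`. Through the Riesz isomorphism `Ψ` becomes a map on the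
weak-* dual of `L²`: the `i`-th coordinate of `Ψ x (t)` is `x (𝟙_{(0,t]} eᵢ)`, which is weak-*
continuous in `x`. By Cauchy–Schwarz the paths `Ψ x` with `‖x‖ ≤ r` are uniformly `1/2`-Hölder,
so on that ball pointwise and uniform convergence coincide (Ascoli) and `Ψ` is continuous into
the uniform topology. The ball is weak-* compact (Banach–Alaoglu), hence so is its image.
-/

open Set Filter Topology

local notation "μ₀₁" => volume.restrict (Icc (0:ℝ) 1)

theorem ContinuousMap.continuous_of_equicontinuous {ι X α : Type*} [TopologicalSpace ι]
    [TopologicalSpace X] [CompactSpace X] [UniformSpace α] {F : ι → C(X, α)}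
    (hF : Equicontinuous fun i => ⇑(F i)) (hFx : ∀ x, Continuous fun i => F i x) :
    Continuous F := by
  refine continuous_iff_continuousAt.2 fun i => ?_
  rw [ContinuousAt, ContinuousMap.tendsto_iff_tendstoUniformly]
  exact UniformFun.tendsto_iff_tendstoUniformly.1
    ((hF.tendsto_uniformFun_iff_pi _ _).2 (tendsto_pi_nhds.2 fun x => (hFx x).continuousAt))

theorem WeakDual.isCompact_normBall {V : Type*} [NormedAddCommGroup V] [NormedSpace ℝ V]
    (r : ℝ) : IsCompact {x : WeakDual ℝ V | ‖toStrongDual x‖ ≤ r} := by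
  convert WeakDual.isCompact_closedBall (0 : StrongDual ℝ V) r
  ext
  simp

lemma intervalIntegral_congr_ae_unitInterval {E : Type*} [NormedAddCommGroup E]
    [NormedSpace ℝ E] {f g : ℝ → E} (hfg : f =ᵐ[μ₀₁] g) {t : ℝ} (ht : t ∈ Icc (0:ℝ) 1) :
    ∫ s in (0:ℝ)..t, f s = ∫ s in (0:ℝ)..t, g s := by
  rw [intervalIntegral.integral_of_le ht.1, intervalIntegral.integral_of_le ht.1]
  exact integral_congr_ae (ae_restrict_of_ae_restrict_of_subset
    (Ioc_subset_Icc_self.trans (Icc_subset_Icc_right ht.2)) hfg)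

section StepFunction

variable {E : Type*} [NormedAddCommGroup E]

noncomputable def stepLp (t : ℝ) (e : E) : Lp E 2 μ₀₁ :=
  indicatorConstLp 2 measurableSet_Ioc (measure_ne_top _ (Ioc 0 t)) e

lemma stepLp_sub_stepLp {s t : ℝ} (hs : 0 ≤ s) (hst : s ≤ t) (e : E) :
    stepLp t e - stepLp s e =
      indicatorConstLp 2 measurableSet_Ioc (measure_ne_top _ (Ioc s t)) e := by
  rw [sub_eq_iff_eq_add', stepLp, stepLp,
    ← indicatorConstLp_disjoint_union _ _ _ _ (Ioc_disjoint_Ioc_of_le le_rfl)]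
  congr 1
  exact (Ioc_union_Ioc_eq_Ioc hs hst).symm

lemma norm_stepLp_sub_stepLp_le {s t : ℝ} (hs : 0 ≤ s) (hst : s ≤ t) (e : E) :
    ‖stepLp t e - stepLp s e‖ ≤ ‖e‖ * √(t - s) := by
  rw [stepLp_sub_stepLp hs hst, norm_indicatorConstLp two_ne_zero ENNReal.ofNat_ne_top,
    ENNReal.toReal_ofNat, ← Real.sqrt_eq_rpow, ← Real.volume_real_Ioc_of_le hst]
  gcongr
  exact ENNReal.toReal_mono (by simp) (Measure.restrict_apply_le _ _)

end StepFunction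

section L2

variable {E : Type*} [NormedAddCommGroup E] [InnerProductSpace ℝ E]

lemma integral_norm_sq_eq_norm_sq (f : Lp E 2 μ₀₁) :
    ∫ t in (0:ℝ)..1, ‖f t‖ ^ 2 = ‖f‖ ^ 2 := by
  rw [← real_inner_self_eq_norm_sq, L2.inner_def, intervalIntegral.integral_of_le zero_le_one,
    ← integral_Icc_eq_integral_Ioc]
  simp_rw [real_inner_self_eq_norm_sq]

lemma inner_stepLp [CompleteSpace E] (f : Lp E 2 μ₀₁) {t : ℝ} (ht : t ∈ Icc (0:ℝ) 1) (e : E) :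
    inner ℝ (stepLp t e) f = inner ℝ e (∫ s in (0:ℝ)..t, f s) := by
  rw [stepLp, L2.inner_indicatorConstLp_eq_inner_setIntegral,
    intervalIntegral.integral_of_le ht.1, Measure.restrict_restrict measurableSet_Ioc,
    inter_eq_left.2 (Ioc_subset_Icc_self.trans (Icc_subset_Icc_right ht.2))]

end L2

section WeakPrimitive

variable {ι E : Type*} [Fintype ι] [NormedAddCommGroup E] [InnerProductSpace ℝ E]
  (b : OrthonormalBasis ι ℝ E)

noncomputable def weakPrimitive (x : WeakDual ℝ (Lp E 2 μ₀₁)) (t : ℝ) : E :=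
  b.repr.symm (WithLp.toLp 2 fun i => x (stepLp t (b i)))

lemma inner_weakPrimitive (x : WeakDual ℝ (Lp E 2 μ₀₁)) (t : ℝ) (i : ι) :
    inner ℝ (b i) (weakPrimitive b x t) = x (stepLp t (b i)) := by
  simp [weakPrimitive, ← b.repr_apply_apply]

lemma weakPrimitive_toDual [CompleteSpace E] (f : Lp E 2 μ₀₁) {t : ℝ} (ht : t ∈ Icc (0:ℝ) 1) :
    weakPrimitive b (StrongDual.toWeakDual (InnerProductSpace.toDual ℝ _ f)) t =
      ∫ s in (0:ℝ)..t, f s := by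
  refine b.repr.injective (PiLp.ext fun i => ?_)
  rw [b.repr_apply_apply, b.repr_apply_apply, inner_weakPrimitive, ← inner_stepLp f ht,
    real_inner_comm]
  rfl

lemma continuous_weakPrimitive_apply (t : ℝ) :
    Continuous fun x : WeakDual ℝ (Lp E 2 μ₀₁) => weakPrimitive b x t :=
  b.repr.symm.continuous.comp <| (PiLp.continuous_toLp 2 _).comp <|
    continuous_pi fun _ => WeakBilin.eval_continuous _ _

lemma norm_weakPrimitive_sub_le (x : WeakDual ℝ (Lp E 2 μ₀₁)) {s t : ℝ} (hs : 0 ≤ s)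
    (hst : s ≤ t) :
    ‖weakPrimitive b x t - weakPrimitive b x s‖ ≤
      √(Fintype.card ι) * ‖WeakDual.toStrongDual x‖ * √(t - s) := by
  refine (b.norm_le_card_mul_iSup_norm_inner _).trans ?_
  rw [mul_assoc]
  gcongr
  refine Real.iSup_le (fun i => ?_) (by positivity)
  rw [inner_sub_right, inner_weakPrimitive, inner_weakPrimitive, ← map_sub]
  calc ‖x (stepLp t (b i) - stepLp s (b i))‖
      ≤ ‖WeakDual.toStrongDual x‖ * ‖stepLp t (b i) - stepLp s (b i)‖ :=
        (WeakDual.toStrongDual x).le_opNorm _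
    _ ≤ ‖WeakDual.toStrongDual x‖ * √(t - s) := by
        gcongr
        simpa using norm_stepLp_sub_stepLp_le hs hst (b i)

lemma dist_weakPrimitive_le (x : WeakDual ℝ (Lp E 2 μ₀₁)) {s t : ℝ} (hs : 0 ≤ s)
    (ht : 0 ≤ t) :
    dist (weakPrimitive b x s) (weakPrimitive b x t) ≤
      √(Fintype.card ι) * ‖WeakDual.toStrongDual x‖ * √(dist s t) := by
  wlog hst : s ≤ t generalizing s t
  · rw [dist_comm, dist_comm s]
    exact this ht hs (le_of_not_ge hst)
  rw [dist_comm, dist_eq_norm, Real.dist_eq, abs_sub_comm, abs_of_nonneg (sub_nonneg.2 hst)]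
  exact norm_weakPrimitive_sub_le b x hs hst

lemma equicontinuous_weakPrimitive (r : ℝ) :
    Equicontinuous fun x : {x : WeakDual ℝ (Lp E 2 μ₀₁) | ‖WeakDual.toStrongDual x‖ ≤ r} =>
      fun t : Icc (0:ℝ) 1 => weakPrimitive b x t := by
  refine Metric.equicontinuous_of_continuity_modulus (fun δ => √(Fintype.card ι) * r * √δ)
    ?_ _ fun s t x => (dist_weakPrimitive_le b x s.2.1 t.2.1).trans ?_
  · exact (by fun_prop : Continuous fun δ : ℝ => √(Fintype.card ι) * r * √δ).tendsto' 0 0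
      (by simp)
  · have hx : ‖WeakDual.toStrongDual (x : WeakDual ℝ (Lp E 2 μ₀₁))‖ ≤ r := x.2
    show _ ≤ √(Fintype.card ι) * r * √(dist (s : ℝ) t)
    gcongr

noncomputable def weakPrimitiveC (x : WeakDual ℝ (Lp E 2 μ₀₁)) : C(Icc (0:ℝ) 1, E) :=
  ⟨fun t => weakPrimitive b x t,
    (equicontinuous_weakPrimitive b ‖WeakDual.toStrongDual x‖).continuous
      ⟨x, le_refl ‖WeakDual.toStrongDual x‖⟩⟩

lemma isCompact_weakPrimitiveC_image_normBall (r : ℝ) :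
    IsCompact (weakPrimitiveC b ''
      {x : WeakDual ℝ (Lp E 2 μ₀₁) | ‖WeakDual.toStrongDual x‖ ≤ r}) :=
  (WeakDual.isCompact_normBall r).image_of_continuousOn <|
    continuousOn_iff_continuous_domRestrict.2 <| ContinuousMap.continuous_of_equicontinuous
      (equicontinuous_weakPrimitive b r) fun t => (continuous_weakPrimitive_apply b t).comp
        continuous_subtype_val

end WeakPrimitive

section CameronMartin

variable {d : ℕ} {w w' : C(Icc (0:ℝ) 1, EuclideanSpace ℝ (Fin d))}
  {g g' : ℝ → EuclideanSpace ℝ (Fin d)}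

lemma IsCMDeriv.apply_zero (hg : IsCMDeriv d w g) : w ⟨0, by norm_num⟩ = 0 := by
  simp [hg.2]

lemma IsCMDeriv.intervalIntegrable (hg : IsCMDeriv d w g) : IntervalIntegrable g volume 0 1 :=
  IntegrableOn.intervalIntegrable <| by
    rw [uIcc_of_le zero_le_one]
    exact hg.1.integrable one_le_two

lemma IsCMDeriv.eq_of_ae_eq (hg : IsCMDeriv d w g) (hg' : IsCMDeriv d w' g')
    (h : g =ᵐ[μ₀₁] g') : w = w' :=
  ContinuousMap.ext fun t => by rw [hg.2, hg'.2, intervalIntegral_congr_ae_unitInterval h t.2]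

lemma IsCMDeriv.ae_eq (hg : IsCMDeriv d w g) (hg' : IsCMDeriv d w g') : g =ᵐ[μ₀₁] g' := by
  rw [EventuallyEq, ← Measure.restrict_congr_set Ioo_ae_eq_Icc,
    ae_restrict_iff' measurableSet_Ioo]
  filter_upwards [hg.intervalIntegrable.ae_hasDerivAt_integral,
    hg'.intervalIntegrable.ae_hasDerivAt_integral] with x hx hx' hx01
  have hmem : x ∈ uIcc (0:ℝ) 1 := by
    rw [uIcc_of_le zero_le_one]
    exact Ioo_subset_Icc_self hx01
  have hzero : (0:ℝ) ∈ uIcc (0:ℝ) 1 := by simp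
  have hloc : (fun y => ∫ s in (0:ℝ)..y, g s) =ᶠ[𝓝 x] fun y => ∫ s in (0:ℝ)..y, g' s := by
    filter_upwards [Icc_mem_nhds hx01.1 hx01.2] with y hy
    rw [← hg.2 ⟨y, hy⟩, ← hg'.2 ⟨y, hy⟩]
  exact (hx hmem 0 hzero).unique ((hx' hmem 0 hzero).congr_of_eventuallyEq hloc)

lemma schilderRate_eq (hg : IsCMDeriv d w g) :
    schilderRate d w = ENNReal.ofReal ((1/2) * ∫ t in (0:ℝ)..1, ‖g t‖ ^ 2) := by
  have hvalues : {e | ∃ g', IsCMDeriv d w g' ∧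
      e = ENNReal.ofReal ((1/2) * ∫ t in (0:ℝ)..1, ‖g' t‖ ^ 2)} =
      {ENNReal.ofReal ((1/2) * ∫ t in (0:ℝ)..1, ‖g t‖ ^ 2)} := by
    ext e
    simp only [mem_ofPred_eq, mem_singleton_iff]
    constructor
    · rintro ⟨g', hg', rfl⟩
      rw [intervalIntegral_congr_ae_unitInterval (f := fun t => ‖g' t‖ ^ 2)
        (g := fun t => ‖g t‖ ^ 2) ((hg'.ae_eq hg).mono fun t ht => by simp only [ht])
        ⟨zero_le_one, le_rfl⟩]
    · rintro rfl
      exact ⟨g, hg, rfl⟩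
  rw [schilderRate, hvalues, sInf_singleton]

lemma schilderRate_le_ofReal_iff {c : ℝ} (hc : 0 ≤ c) :
    schilderRate d w ≤ ENNReal.ofReal c ↔
      ∃ g, IsCMDeriv d w g ∧ ∫ t in (0:ℝ)..1, ‖g t‖ ^ 2 ≤ 2 * c := by
  constructor
  · intro hw
    by_cases hex : ∃ g, IsCMDeriv d w g
    · obtain ⟨g, hg⟩ := hex
      rw [schilderRate_eq hg, ENNReal.ofReal_le_ofReal_iff hc] at hw
      exact ⟨g, hg, by linarith⟩
    · simp [schilderRate, not_exists.1 hex] at hw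
  · rintro ⟨g, hg, hE⟩
    rw [schilderRate_eq hg]
    exact ENNReal.ofReal_le_ofReal (by linarith)

lemma isCMDeriv_weakPrimitiveC (f : Lp (EuclideanSpace ℝ (Fin d)) 2 μ₀₁) :
    IsCMDeriv d (weakPrimitiveC (EuclideanSpace.basisFun (Fin d) ℝ)
      (StrongDual.toWeakDual (InnerProductSpace.toDual ℝ _ f))) f :=
  ⟨Lp.memLp f, fun t => weakPrimitive_toDual _ f t.2⟩

lemma schilderRate_sublevel_eq_image {c : ℝ} (hc : 0 ≤ c) :
    {w : C(Icc (0:ℝ) 1, EuclideanSpace ℝ (Fin d)) |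
      w ⟨0, by norm_num⟩ = 0 ∧ schilderRate d w ≤ ENNReal.ofReal c} =
      weakPrimitiveC (EuclideanSpace.basisFun (Fin d) ℝ) ''
        {x | ‖WeakDual.toStrongDual x‖ ≤ √(2 * c)} := by
  have hnorm (f : Lp (EuclideanSpace ℝ (Fin d)) 2 μ₀₁) :
      ‖WeakDual.toStrongDual (StrongDual.toWeakDual (InnerProductSpace.toDual ℝ _ f))‖ ≤
        √(2 * c) ↔ ∫ t in (0:ℝ)..1, ‖f t‖ ^ 2 ≤ 2 * c := by
    rw [integral_norm_sq_eq_norm_sq, ← Real.le_sqrt (norm_nonneg _) (by positivity)]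
    simp
  ext w
  constructor
  · rintro ⟨-, hw⟩
    obtain ⟨g, hg, hE⟩ := (schilderRate_le_ofReal_iff hc).1 hw
    refine ⟨StrongDual.toWeakDual (InnerProductSpace.toDual ℝ _ (hg.1.toLp g)), ?_,
      (isCMDeriv_weakPrimitiveC _).eq_of_ae_eq hg hg.1.coeFn_toLp⟩
    rwa [mem_ofPred_eq, hnorm, intervalIntegral_congr_ae_unitInterval (g := fun t => ‖g t‖ ^ 2)
      (hg.1.coeFn_toLp.mono fun t ht => by simp only [ht]) ⟨zero_le_one, le_rfl⟩]
  · rintro ⟨x, hx, rfl⟩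
    obtain ⟨f, rfl⟩ : ∃ f, StrongDual.toWeakDual (InnerProductSpace.toDual ℝ _ f) = x :=
      ⟨(InnerProductSpace.toDual ℝ _).symm (WeakDual.toStrongDual x), by simp⟩
    have hf := isCMDeriv_weakPrimitiveC f
    exact ⟨hf.apply_zero, (schilderRate_le_ofReal_iff hc).2 ⟨f, hf, (hnorm f).1 hx⟩⟩

end CameronMartin

/-- The Schilder rate function is a good rate function: each sublevel set
`{w ∈ C₀ : I(w) ≤ c}` is compact in the uniform topology. -/
theorem schilderRate_isGoodRateFunction (d : ℕ) (c : ℝ) (hc : 0 ≤ c) :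
    IsCompact {w : C(Set.Icc (0:ℝ) 1, EuclideanSpace ℝ (Fin d)) |
      w ⟨0, by norm_num⟩ = 0 ∧ schilderRate d w ≤ ENNReal.ofReal c} := by
  rw [schilderRate_sublevel_eq_image hc]
  exact isCompact_weakPrimitiveC_image_normBall _ _
end

section
/- Fix p with 2 ≤ p < 3 and a reference function X^1 : Δ → ℝ^d that is 1/p-Hölder (|X^1_{s,t}| ≤ C(t-s)^{1/p}). Suppose (Y, Y') is a controlled path: Y is 1/p-Hölder, Y' is 1/p-Hölder, and the remainder R_{s,t} = Y_t - Y_s - Y'_s · X^1_{s,t} is 2/p-Hölder. If g : ℝ^n → ℝ^m is twice continuously differentiable with bounded first and second derivatives, then (g(Y), ∇g(Y)·Y') is again a controlled path: g(Y) is 1/p-Hölder, ∇g(Y)·Y' is 1/p-Hölder, and the remainder R^g_{s,t} = g(Y_t) - g(Y_s) - ∇g(Y_s)·Y'_s·X^1_{s,t} satisfies |R^g_{s,t}| ≤ C'(t-s)^{2/p} for some constant C'. -/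
/-!
Taylor's formula with a Lipschitz derivative gives
`g(Y_t) - g(Y_s) - ∇g(Y_s)(Y_t - Y_s) = O(|Y_t - Y_s|²) = O((t-s)^{2/p})`; substituting
`Y_t - Y_s = Y'_s X¹_{s,t} + R_{s,t}` leaves the extra error `∇g(Y_s) R_{s,t} = O((t-s)^{2/p})`.
The Gubinelli derivative `∇g(Y)·Y'` is a product of two `1/p`-Hölder paths which are bounded
on `[0,1]`, hence is `1/p`-Hölder as well.
-/

open Metric Set

section Holder

variable {E F G : Type*} [NormedAddCommGroup E] [NormedAddCommGroup F] [NormedAddCommGroup G]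

/-- For `F s t = f t - f s` this is `α`-Hölder continuity of `f` on `[0, 1]`. -/
def HolderBound (F : ℝ → ℝ → E) (K α : ℝ) : Prop :=
  ∀ s t, 0 ≤ s → s ≤ t → t ≤ 1 → ‖F s t‖ ≤ K * (t - s) ^ α

namespace HolderBound

variable {F₁ : ℝ → ℝ → E} {K K₁ K₂ L L₁ L₂ α : ℝ}

theorem nonneg (h : HolderBound F₁ K α) : 0 ≤ K := by
  simpa using (norm_nonneg _).trans (h 0 1 le_rfl zero_le_one le_rfl)

theorem of_norm_le_mul {H : ℝ → ℝ → F} (h : HolderBound F₁ K α) (hL : 0 ≤ L)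
    (hH : ∀ s t, 0 ≤ s → s ≤ t → t ≤ 1 → ‖H s t‖ ≤ L * ‖F₁ s t‖) :
    HolderBound H (L * K) α := fun s t hs hst ht =>
  calc ‖H s t‖ ≤ L * ‖F₁ s t‖ := hH s t hs hst ht
    _ ≤ L * (K * (t - s) ^ α) := mul_le_mul_of_nonneg_left (h s t hs hst ht) hL
    _ = L * K * (t - s) ^ α := by ring

theorem of_norm_le_add {F₂ : ℝ → ℝ → F} (h₁ : HolderBound F₁ K₁ α) (h₂ : HolderBound F₂ K₂ α)
    (hL₁ : 0 ≤ L₁) (hL₂ : 0 ≤ L₂) {H : ℝ → ℝ → G}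
    (hH : ∀ s t, 0 ≤ s → s ≤ t → t ≤ 1 → ‖H s t‖ ≤ L₁ * ‖F₁ s t‖ + L₂ * ‖F₂ s t‖) :
    HolderBound H (L₁ * K₁ + L₂ * K₂) α := fun s t hs hst ht =>
  calc ‖H s t‖ ≤ L₁ * ‖F₁ s t‖ + L₂ * ‖F₂ s t‖ := hH s t hs hst ht
    _ ≤ L₁ * (K₁ * (t - s) ^ α) + L₂ * (K₂ * (t - s) ^ α) :=
      add_le_add (mul_le_mul_of_nonneg_left (h₁ s t hs hst ht) hL₁)
        (mul_le_mul_of_nonneg_left (h₂ s t hs hst ht) hL₂)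
    _ = (L₁ * K₁ + L₂ * K₂) * (t - s) ^ α := by ring

theorem sq (h : HolderBound F₁ K α) : HolderBound (fun s t => ‖F₁ s t‖ ^ 2) (K ^ 2) (α * 2) := by
  intro s t hs hst ht
  have hts : 0 ≤ t - s := sub_nonneg.2 hst
  calc ‖‖F₁ s t‖ ^ 2‖ = ‖F₁ s t‖ ^ 2 := Real.norm_of_nonneg (by positivity)
    _ ≤ (K * (t - s) ^ α) ^ 2 := pow_le_pow_left₀ (norm_nonneg _) (h s t hs hst ht) 2
    _ = K ^ 2 * (t - s) ^ (α * 2) := by rw [mul_pow, ← Real.rpow_mul_natCast hts]; norm_num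

theorem norm_le_norm_zero_add {f : ℝ → E} (h : HolderBound (fun s t => f t - f s) K α) (hα : 0 ≤ α)
    {t : ℝ} (ht : t ∈ Icc (0 : ℝ) 1) : ‖f t‖ ≤ ‖f 0‖ + K := by
  have hinc : ‖f t - f 0‖ ≤ K :=
    calc ‖f t - f 0‖ ≤ K * (t - 0) ^ α := h 0 t le_rfl ht.1 ht.2
      _ ≤ K * 1 := mul_le_mul_of_nonneg_left
          (Real.rpow_le_one (by simpa using ht.1) (by simpa using ht.2) hα) h.nonneg
      _ = K := mul_one K
  linarith [norm_le_insert' (f t) (f 0)]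

variable [NormedSpace ℝ E] [NormedSpace ℝ F] [NormedSpace ℝ G]

theorem clm_comp {A : ℝ → F →L[ℝ] G} {B : ℝ → E →L[ℝ] F} {KA KB a b : ℝ}
    (hA : HolderBound (fun s t => A t - A s) KA α) (hB : HolderBound (fun s t => B t - B s) KB α)
    (ha : ∀ t ∈ Icc (0 : ℝ) 1, ‖A t‖ ≤ a) (hb : ∀ t ∈ Icc (0 : ℝ) 1, ‖B t‖ ≤ b) :
    HolderBound (fun s t => (A t).comp (B t) - (A s).comp (B s)) (a * KB + b * KA) α := by
  have ha0 : 0 ≤ a := (norm_nonneg _).trans (ha 0 ⟨le_rfl, zero_le_one⟩)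
  have hb0 : 0 ≤ b := (norm_nonneg _).trans (hb 0 ⟨le_rfl, zero_le_one⟩)
  refine hB.of_norm_le_add hA ha0 hb0 fun s t hs hst ht => ?_
  have hsplit : (A t).comp (B t) - (A s).comp (B s)
      = (A t).comp (B t - B s) + (A t - A s).comp (B s) := by
    rw [ContinuousLinearMap.comp_sub, ContinuousLinearMap.sub_comp]; abel
  calc ‖(A t).comp (B t) - (A s).comp (B s)‖
      ≤ ‖A t‖ * ‖B t - B s‖ + ‖A t - A s‖ * ‖B s‖ := by
        rw [hsplit]
        exact (norm_add_le _ _).trans (add_le_add (ContinuousLinearMap.opNorm_comp_le _ _)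
          (ContinuousLinearMap.opNorm_comp_le _ _))
    _ ≤ a * ‖B t - B s‖ + ‖A t - A s‖ * b := by
        gcongr
        exacts [ha t ⟨hs.trans hst, ht⟩, hb s ⟨hs, hst.trans ht⟩]
    _ = a * ‖B t - B s‖ + b * ‖A t - A s‖ := by ring

end HolderBound

end Holder

section Taylor

variable {E F : Type*} [NormedAddCommGroup E] [NormedSpace ℝ E]
  [NormedAddCommGroup F] [NormedSpace ℝ F] {g : E → F}

theorem norm_fderiv_sub_fderiv_le {M : ℝ} (hg : ContDiff ℝ 2 g)
    (hg2 : ∀ v, ‖iteratedFDeriv ℝ 2 g v‖ ≤ M) (x y : E) :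
    ‖fderiv ℝ g y - fderiv ℝ g x‖ ≤ M * ‖y - x‖ := by
  have hdiff : Differentiable ℝ (fderiv ℝ g) :=
    (hg.fderiv_right (m := 1) le_rfl).differentiable one_ne_zero
  refine convex_univ.norm_image_sub_le_of_norm_fderiv_le (fun z _ => hdiff z) (fun z _ => ?_)
    trivial trivial
  rw [← norm_iteratedFDeriv_one, norm_iteratedFDeriv_fderiv]
  exact hg2 z

theorem norm_image_sub_sub_fderiv_le {L : ℝ} (hL : 0 ≤ L) (hg : Differentiable ℝ g)
    (hLip : ∀ x y, ‖fderiv ℝ g y - fderiv ℝ g x‖ ≤ L * ‖y - x‖) (x y : E) :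
    ‖g y - g x - fderiv ℝ g x (y - x)‖ ≤ L * ‖y - x‖ ^ 2 := by
  have hbound : ∀ z ∈ closedBall x ‖y - x‖, ‖fderiv ℝ g z - fderiv ℝ g x‖ ≤ L * ‖y - x‖ :=
    fun z hz => (hLip x z).trans (mul_le_mul_of_nonneg_left (mem_closedBall_iff_norm.1 hz) hL)
  calc ‖g y - g x - fderiv ℝ g x (y - x)‖ ≤ L * ‖y - x‖ * ‖y - x‖ :=
        (convex_closedBall x _).norm_image_sub_le_of_norm_fderiv_le' (fun z _ => hg z) hbound
          (mem_closedBall_self (norm_nonneg _)) (mem_closedBall_iff_norm.2 le_rfl)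
    _ = L * ‖y - x‖ ^ 2 := by ring

theorem norm_image_sub_sub_fderiv_apply_le {L M : ℝ} (hL : 0 ≤ L) (hg : Differentiable ℝ g)
    (hg1 : ∀ v, ‖fderiv ℝ g v‖ ≤ M) (hLip : ∀ x y, ‖fderiv ℝ g y - fderiv ℝ g x‖ ≤ L * ‖y - x‖)
    (x y v : E) :
    ‖g y - g x - fderiv ℝ g x v‖ ≤ L * ‖y - x‖ ^ 2 + M * ‖y - x - v‖ := by
  have hsplit : g y - g x - fderiv ℝ g x v
      = (g y - g x - fderiv ℝ g x (y - x)) + fderiv ℝ g x (y - x - v) := by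
    simp only [map_sub]; abel
  rw [hsplit]
  exact (norm_add_le _ _).trans (add_le_add (norm_image_sub_sub_fderiv_le hL hg hLip x y)
    (((fderiv ℝ g x).le_opNorm _).trans (mul_le_mul_of_nonneg_right (hg1 x) (norm_nonneg _))))

end Taylor

theorem controlled_path_composition_general (d n m : ℕ) (p : ℝ) (hp : 2 ≤ p)
    (X1 : ℝ → ℝ → (Fin d → ℝ))
    (Y : ℝ → (Fin n → ℝ)) (Y' : ℝ → ((Fin d → ℝ) →L[ℝ] (Fin n → ℝ)))
    (CY CY' CR : ℝ)
    (hY : ∀ s t : ℝ, 0 ≤ s → s ≤ t → t ≤ 1 → ‖Y t - Y s‖ ≤ CY * (t - s) ^ (1 / p))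
    (hY' : ∀ s t : ℝ, 0 ≤ s → s ≤ t → t ≤ 1 → ‖Y' t - Y' s‖ ≤ CY' * (t - s) ^ (1 / p))
    (hR : ∀ s t : ℝ, 0 ≤ s → s ≤ t → t ≤ 1 →
      ‖Y t - Y s - Y' s (X1 s t)‖ ≤ CR * (t - s) ^ (2 / p))
    (g : (Fin n → ℝ) → (Fin m → ℝ)) (hg : ContDiff ℝ 2 g)
    (M1 M2 : ℝ)
    (hg1 : ∀ v, ‖fderiv ℝ g v‖ ≤ M1)
    (hg2 : ∀ v, ‖iteratedFDeriv ℝ 2 g v‖ ≤ M2) :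
    (∃ C1 : ℝ, ∀ s t : ℝ, 0 ≤ s → s ≤ t → t ≤ 1 →
      ‖g (Y t) - g (Y s)‖ ≤ C1 * (t - s) ^ (1 / p)) ∧
    (∃ C2 : ℝ, ∀ s t : ℝ, 0 ≤ s → s ≤ t → t ≤ 1 →
      ‖(fderiv ℝ g (Y t)).comp (Y' t) - (fderiv ℝ g (Y s)).comp (Y' s)‖
        ≤ C2 * (t - s) ^ (1 / p)) ∧
    (∃ C' : ℝ, ∀ s t : ℝ, 0 ≤ s → s ≤ t → t ≤ 1 →
      ‖g (Y t) - g (Y s) - ((fderiv ℝ g (Y s)).comp (Y' s)) (X1 s t)‖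
        ≤ C' * (t - s) ^ (2 / p)) := by
  replace hY : HolderBound (fun s t => Y t - Y s) CY (1 / p) := hY
  replace hY' : HolderBound (fun s t => Y' t - Y' s) CY' (1 / p) := hY'
  replace hR : HolderBound (fun s t => Y t - Y s - Y' s (X1 s t)) CR (2 / p) := hR
  have hM1 : 0 ≤ M1 := (norm_nonneg _).trans (hg1 0)
  have hM2 : 0 ≤ M2 := (norm_nonneg _).trans (hg2 0)
  have hgd : Differentiable ℝ g := hg.differentiable two_ne_zero
  have hLipg : ∀ x y, ‖g y - g x‖ ≤ M1 * ‖y - x‖ := fun x y =>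
    convex_univ.norm_image_sub_le_of_norm_fderiv_le (fun z _ => hgd z) (fun z _ => hg1 z)
      trivial trivial
  have hLip := norm_fderiv_sub_fderiv_le hg hg2
  have hYsq : HolderBound (fun s t => ‖Y t - Y s‖ ^ 2) (CY ^ 2) (2 / p) := by
    simpa only [one_div_mul_eq_div] using hY.sq
  have hgY : HolderBound (fun s t => g (Y t) - g (Y s)) (M1 * CY) (1 / p) :=
    hY.of_norm_le_mul hM1 fun s t _ _ _ => hLipg _ _
  have hDgY : HolderBound (fun s t => fderiv ℝ g (Y t) - fderiv ℝ g (Y s)) (M2 * CY) (1 / p) :=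
    hY.of_norm_le_mul hM2 fun s t _ _ _ => hLip _ _
  have hGub := HolderBound.clm_comp hDgY hY' (fun t _ => hg1 _)
    (fun t ht => hY'.norm_le_norm_zero_add (by positivity) ht)
  have hRg : HolderBound (fun s t => g (Y t) - g (Y s) - ((fderiv ℝ g (Y s)).comp (Y' s)) (X1 s t))
      (M2 * CY ^ 2 + M1 * CR) (2 / p) :=
    hYsq.of_norm_le_add hR hM2 hM1 fun s t _ _ _ => by
      rw [Real.norm_of_nonneg (by positivity)]
      exact norm_image_sub_sub_fderiv_apply_le hM2 hgd hg1 hLip _ _ _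
  exact ⟨⟨_, hgY⟩, ⟨_, hGub⟩, ⟨_, hRg⟩⟩

/-- Stability of controlled paths under composition with C² functions.
Fix `2 ≤ p < 3` and a reference first-level path `X¹` that is `1/p`-Hölder on the simplex.
If `(Y, Y')` is a controlled path (Y and Y' are `1/p`-Hölder and the Gubinelli remainder
`R_{s,t} = Y_t - Y_s - Y'_s X¹_{s,t}` is `2/p`-Hölder) and `g` is C² with bounded first and
second derivatives, then `(g(Y), ∇g(Y)·Y')` is again a controlled path: `g(Y)` and
`∇g(Y)·Y'` are `1/p`-Hölder and the remainder
`R^g_{s,t} = g(Y_t) - g(Y_s) - ∇g(Y_s)·Y'_s·X¹_{s,t}` is bounded by `C'(t-s)^{2/p}`. -/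
theorem controlled_path_composition (d n m : ℕ) (p : ℝ) (hp : 2 ≤ p) (hp3 : p < 3)
    (X1 : ℝ → ℝ → (Fin d → ℝ)) (C : ℝ)
    (hX1 : ∀ s t : ℝ, 0 ≤ s → s ≤ t → t ≤ 1 → ‖X1 s t‖ ≤ C * (t - s) ^ (1 / p))
    (Y : ℝ → (Fin n → ℝ)) (Y' : ℝ → ((Fin d → ℝ) →L[ℝ] (Fin n → ℝ)))
    (CY CY' CR : ℝ)
    (hY : ∀ s t : ℝ, 0 ≤ s → s ≤ t → t ≤ 1 → ‖Y t - Y s‖ ≤ CY * (t - s) ^ (1 / p))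
    (hY' : ∀ s t : ℝ, 0 ≤ s → s ≤ t → t ≤ 1 → ‖Y' t - Y' s‖ ≤ CY' * (t - s) ^ (1 / p))
    (hR : ∀ s t : ℝ, 0 ≤ s → s ≤ t → t ≤ 1 →
      ‖Y t - Y s - Y' s (X1 s t)‖ ≤ CR * (t - s) ^ (2 / p))
    (g : (Fin n → ℝ) → (Fin m → ℝ)) (hg : ContDiff ℝ 2 g)
    (M1 M2 : ℝ)
    (hg1 : ∀ v, ‖fderiv ℝ g v‖ ≤ M1)
    (hg2 : ∀ v, ‖iteratedFDeriv ℝ 2 g v‖ ≤ M2) :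
    (∃ C1 : ℝ, ∀ s t : ℝ, 0 ≤ s → s ≤ t → t ≤ 1 →
      ‖g (Y t) - g (Y s)‖ ≤ C1 * (t - s) ^ (1 / p)) ∧
    (∃ C2 : ℝ, ∀ s t : ℝ, 0 ≤ s → s ≤ t → t ≤ 1 →
      ‖(fderiv ℝ g (Y t)).comp (Y' t) - (fderiv ℝ g (Y s)).comp (Y' s)‖
        ≤ C2 * (t - s) ^ (1 / p)) ∧
    (∃ C' : ℝ, ∀ s t : ℝ, 0 ≤ s → s ≤ t → t ≤ 1 →
      ‖g (Y t) - g (Y s) - ((fderiv ℝ g (Y s)).comp (Y' s)) (X1 s t)‖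
        ≤ C' * (t - s) ^ (2 / p)) :=
  controlled_path_composition_general d n m p hp X1 Y Y' CY CY' CR hY hY' hR g hg M1 M2 hg1 hg2
end
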